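/- arXiv:2012.01969 — 11 statements merged into one kernel-verified Lean document; each statement's English description precedes it below -/
import Mathlib

section
/- Let a ≥ 2 be an integer. Then for every positive integer n, the generalized Genocchi number G_{n,a} is an integer; that is, n!·(coeff n of the formal power series (a : ℚ) • X · (∑_{j=0}^{a-1} rescale j (exp ℚ))⁻¹ in ℚ[[X]]) lies in the image of ℤ in ℚ. -/
open PowerSeries Finset

/-- The generalized Genocchi numbers `G_{n,a}`:
`G n a = n! * (n-th coefficient of (a : ℚ) • X * (∑_{j=0}^{a-1} rescale j (exp ℚ))⁻¹)`. -/
noncomputable def genGenocchi (n a : ℕ) : ℚ :=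
  (Nat.factorial n : ℚ) * PowerSeries.coeff n
    ((a : ℚ) • (PowerSeries.X * (∑ j ∈ Finset.range a, PowerSeries.rescale (j : ℚ) (PowerSeries.exp ℚ))⁻¹))

section AuxInteger
open Polynomial


/-- Fact 1: K! divides the K-th finite difference of y^n at any integer m. -/
lemma factorial_dvd_finite_diff (n : ℕ) : ∀ (K : ℕ) (m : ℤ),
    (K.factorial : ℤ) ∣ ∑ i ∈ range (K + 1), (-1) ^ (K - i) * (K.choose i : ℤ) * (m + i) ^ n := by
  induction n with
  | zero =>
    intro K m
    rcases Nat.eq_zero_or_pos K with hK | hK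
    · subst hK; simp
    · have h : ∑ i ∈ range (K + 1), (-1) ^ (K - i) * (K.choose i : ℤ) * (m + i) ^ 0
          = (-1) ^ K * ∑ i ∈ range (K + 1), (-1) ^ i * (K.choose i : ℤ) := by
        rw [mul_sum]
        refine sum_congr rfl fun i hi => ?_
        rw [mem_range] at hi
        have hiK : i ≤ K := Nat.lt_succ_iff.mp hi
        have : ((-1 : ℤ)) ^ (K - i) = (-1) ^ K * (-1) ^ i := by
          rw [← pow_add]
          have : ((-1 : ℤ)) ^ (K - i) = (-1) ^ (K - i) * (-1) ^ (i + i) := by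
            rw [Even.neg_one_pow ⟨i, rfl⟩, mul_one]
          rw [this, ← pow_add]
          congr 1
          omega
        rw [pow_zero, mul_one, this]
        ring
      rw [h, Int.alternating_sum_range_choose_of_ne hK.ne']
      · simp
  | succ n ih =>
    intro K m
    have expand : ∀ i : ℕ, (m + i) ^ (n + 1) = m * (m + i) ^ n + i * (m + i) ^ n := by
      intro i; ring
    have hsplit : ∑ i ∈ range (K + 1), (-1) ^ (K - i) * (K.choose i : ℤ) * (m + i) ^ (n + 1)
        = m * (∑ i ∈ range (K + 1), (-1) ^ (K - i) * (K.choose i : ℤ) * (m + i) ^ n)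
          + ∑ i ∈ range (K + 1), (-1) ^ (K - i) * (K.choose i : ℤ) * i * (m + i) ^ n := by
      rw [mul_sum, ← sum_add_distrib]
      refine sum_congr rfl fun i hi => ?_
      rw [expand i]; ring
    rw [hsplit]
    refine dvd_add (Dvd.dvd.mul_left (ih K m) m) ?_
    rcases Nat.eq_zero_or_pos K with hK | hK
    · subst hK; simp
    · obtain ⟨K', rfl⟩ := Nat.exists_eq_add_of_lt hK
      rw [zero_add] at *
      rw [Finset.sum_range_succ']
      simp only [Nat.cast_zero, mul_zero, zero_mul, add_zero, Nat.cast_add, Nat.cast_one]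
      have hterm : ∀ i : ℕ, (-1 : ℤ) ^ (K' + 1 - (i + 1)) * ((K' + 1).choose (i + 1) : ℤ)
            * (i + 1) * (m + (i + 1)) ^ n
          = (K' + 1) * ((-1) ^ (K' - i) * (K'.choose i : ℤ) * ((m + 1) + i) ^ n) := by
        intro i
        have h1 : (K' + 1) * K'.choose i = (K' + 1).choose (i + 1) * (i + 1) :=
          Nat.add_one_mul_choose_eq K' i
        have h2 : ((K' + 1).choose (i + 1) : ℤ) * (i + 1) = (K' + 1) * (K'.choose i : ℤ) := by
          exact_mod_cast h1.symm
        have h3 : K' + 1 - (i + 1) = K' - i := by omega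
        rw [h3]
        have : m + ((i : ℤ) + 1) = (m + 1) + i := by ring
        rw [this]
        calc (-1 : ℤ) ^ (K' - i) * ((K' + 1).choose (i + 1) : ℤ) * (i + 1) * ((m + 1) + i) ^ n
            = (-1 : ℤ) ^ (K' - i) * (((K' + 1).choose (i + 1) : ℤ) * (i + 1)) * ((m + 1) + i) ^ n := by ring
          _ = _ := by rw [h2]; ring
      rw [Finset.sum_congr rfl fun i _ => hterm i, ← Finset.mul_sum]
      rw [Nat.factorial_succ]
      push_cast
      exact mul_dvd_mul_left _ (ih K' (m + 1))


/-- The additive map sending `∑ c_m Polynomial.X^m` to `∑ c_m m^n`. -/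
noncomputable def valn (n : ℕ) : Polynomial ℤ →+ ℤ where
  toFun p := p.sum fun m c => c * (m : ℤ) ^ n
  map_zero' := Polynomial.sum_zero_index _
  map_add' p q := Polynomial.sum_add_index p q (fun m c => c * (m : ℤ) ^ n)
    (fun m => zero_mul _) (fun m c₁ c₂ => add_mul c₁ c₂ _)

lemma valn_monomial (n m : ℕ) (c : ℤ) : valn n (Polynomial.monomial m c) = c * (m : ℤ) ^ n := by
  show (Polynomial.monomial m c).sum (fun m c => c * (m : ℤ) ^ n) = _
  exact Polynomial.sum_monomial_index c _ (zero_mul _)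

lemma valn_C_mul_X_pow (n m : ℕ) (c : ℤ) :
    valn n (Polynomial.C c * Polynomial.X ^ m) = c * (m : ℤ) ^ n := by
  rw [Polynomial.C_mul_X_pow_eq_monomial, valn_monomial]

lemma neg_one_pow_flip {R : Type*} [CommRing R] {i K : ℕ} (h : i ≤ K) :
    ((-1 : R)) ^ (i + K) = (-1) ^ (K - i) := by
  have : i + K = (K - i) + (i + i) := by omega
  rw [this, pow_add, Even.neg_one_pow ⟨i, rfl⟩, mul_one]

lemma sub_one_pow_mul_X_pow (K m : ℕ) :
    ((Polynomial.X : Polynomial ℤ) - 1) ^ K * Polynomial.X ^ m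
      = ∑ i ∈ range (K + 1), Polynomial.C ((-1) ^ (K - i) * (K.choose i : ℤ)) * Polynomial.X ^ (i + m) := by
  rw [sub_pow, Finset.sum_mul]
  refine Finset.sum_congr rfl fun i hi => ?_
  rw [mem_range, Nat.lt_succ_iff] at hi
  rw [map_mul, Polynomial.C_eq_natCast, ← neg_one_pow_flip hi]
  have : ((-1 : Polynomial ℤ)) ^ (i + K) = Polynomial.C ((-1 : ℤ) ^ (i + K)) := by
    simp
  rw [← this, pow_add]
  ring

lemma factorial_dvd_valn_sub_one_pow_mul (n K : ℕ) (p : Polynomial ℤ) :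
    (K.factorial : ℤ) ∣ valn n (((Polynomial.X : Polynomial ℤ) - 1) ^ K * p) := by
  induction p using Polynomial.induction_on' with
  | add p q hp hq => rw [mul_add, map_add]; exact dvd_add hp hq
  | monomial m c =>
    have hre : ((Polynomial.X : Polynomial ℤ) - 1) ^ K * Polynomial.monomial m c
        = Polynomial.C c * (((Polynomial.X : Polynomial ℤ) - 1) ^ K * Polynomial.X ^ m) := by
      rw [← Polynomial.C_mul_X_pow_eq_monomial]; ring
    rw [hre, sub_one_pow_mul_X_pow, Finset.mul_sum]
    have : ∀ i ∈ range (K + 1), Polynomial.C c *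
          (Polynomial.C ((-1) ^ (K - i) * (K.choose i : ℤ)) * Polynomial.X ^ (i + m))
        = Polynomial.C (c * ((-1) ^ (K - i) * (K.choose i : ℤ))) * Polynomial.X ^ (i + m) := by
      intro i _; simp only [map_mul]; ring
    rw [Finset.sum_congr rfl this, map_sum]
    have heq : ∀ i ∈ range (K + 1), valn n (Polynomial.C (c * ((-1) ^ (K - i) * (K.choose i : ℤ)))
          * Polynomial.X ^ (i + m)) = c * ((-1) ^ (K - i) * (K.choose i : ℤ) * ((m : ℤ) + i) ^ n) := by
      intro i _
      rw [valn_C_mul_X_pow]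
      push_cast
      ring
    rw [Finset.sum_congr rfl heq, ← Finset.mul_sum]
    exact Dvd.dvd.mul_left (factorial_dvd_finite_diff n K m) c

/-- The integer `c_{n,k}` in the expansion of the generalized Genocchi numbers. -/
def genC (n k a : ℕ) : ℤ :=
  ∑ j ∈ range (k + 1), (-1) ^ (k - j) * (k.choose j : ℤ)
    * (((a * j + 1 : ℕ) : ℤ) ^ n - ((a * j : ℕ) : ℤ) ^ n)

lemma valn_geom_expansion (n k a : ℕ) :
    valn n (((Polynomial.X : Polynomial ℤ) ^ a - 1) ^ k * (Polynomial.X - 1)) = genC n k a := by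
  have hexp : ((Polynomial.X : Polynomial ℤ) ^ a - 1) ^ k * (Polynomial.X - 1)
      = ∑ j ∈ range (k + 1), (Polynomial.C ((-1) ^ (k - j) * (k.choose j : ℤ)) * Polynomial.X ^ (a * j + 1)
          - Polynomial.C ((-1) ^ (k - j) * (k.choose j : ℤ)) * Polynomial.X ^ (a * j)) := by
    rw [sub_pow, Finset.sum_mul]
    refine Finset.sum_congr rfl fun j hj => ?_
    rw [mem_range, Nat.lt_succ_iff] at hj
    have h1 : ((-1 : Polynomial ℤ)) ^ (j + k) = Polynomial.C ((-1 : ℤ) ^ (k - j)) := by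
      rw [neg_one_pow_flip hj]; simp
    rw [h1, ← Polynomial.C_eq_natCast, ← pow_mul, one_pow, map_mul]
    have h2 : (Polynomial.X : Polynomial ℤ) ^ (a * j + 1) = Polynomial.X ^ (a * j) * Polynomial.X := by rw [pow_succ]
    rw [h2]
    ring
  rw [hexp, map_sum]
  refine Finset.sum_congr rfl fun j hj => ?_
  rw [map_sub, valn_C_mul_X_pow, valn_C_mul_X_pow]
  ring

lemma succ_dvd_genC (n k a : ℕ) : ((k : ℤ) + 1) ∣ genC n k a := by
  rw [← valn_geom_expansion n k a]
  have hpoly : ((Polynomial.X : Polynomial ℤ) ^ a - 1) ^ k * (Polynomial.X - 1)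
      = (Polynomial.X - 1) ^ (k + 1) * (∑ i ∈ range a, Polynomial.X ^ i) ^ k := by
    rw [← geom_sum_mul (Polynomial.X : Polynomial ℤ) a, mul_pow, pow_succ]
    ring
  rw [hpoly]
  have h1 : ((k : ℤ) + 1) ∣ ((k + 1).factorial : ℤ) := by
    exact_mod_cast Int.natCast_dvd_natCast.mpr (Nat.dvd_factorial (Nat.succ_pos k) le_rfl)
  exact h1.trans (factorial_dvd_valn_sub_one_pow_mul n (k + 1) _)

end AuxInteger

noncomputable def Sps (a : ℕ) : ℚ⟦X⟧ := ∑ j ∈ range a, rescale (j : ℚ) (exp ℚ)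

noncomputable def Ups (a : ℕ) : ℚ⟦X⟧ := rescale (a : ℚ) (exp ℚ) - 1

lemma rescale_exp_pow (a j : ℕ) :
    (rescale (a : ℚ) (exp ℚ)) ^ j = rescale ((a * j : ℕ) : ℚ) (exp ℚ) := by
  rw [← map_pow, exp_pow_eq_rescale_exp, rescale_rescale]
  push_cast
  rw [mul_comm]

lemma exp_mul_rescale (c : ℚ) :
    exp ℚ * rescale c (exp ℚ) = rescale (c + 1) (exp ℚ) := by
  have := exp_mul_exp_eq_exp_add (c : ℚ) (1 : ℚ)
  rw [rescale_one] at this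
  simpa [mul_comm] using this

lemma exp_sub_one_mul_Sps (a : ℕ) : (exp ℚ - 1) * Sps a = Ups a := by
  unfold Sps Ups
  rw [sub_mul, one_mul, Finset.mul_sum]
  have h1 : ∀ j ∈ range a, exp ℚ * rescale (j : ℚ) (exp ℚ)
      = rescale (((j + 1 : ℕ) : ℚ)) (exp ℚ) := by
    intro j _
    rw [exp_mul_rescale]
    norm_num
  rw [Finset.sum_congr rfl h1, ← Finset.sum_sub_distrib]
  rw [Finset.sum_range_sub (fun j => rescale ((j : ℕ) : ℚ) (exp ℚ)) a]
  simp [rescale_zero]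

lemma constantCoeff_Sps (a : ℕ) : constantCoeff (Sps a) = a := by
  unfold Sps
  rw [map_sum]
  have : ∀ j ∈ range a, constantCoeff (rescale (j : ℚ) (exp ℚ)) = 1 := by
    intro j _
    rw [← coeff_zero_eq_constantCoeff_apply, coeff_rescale]
    simp [coeff_zero_eq_constantCoeff_apply, constantCoeff_exp]
  rw [Finset.sum_congr rfl this]
  simp

lemma constantCoeff_Ups (a : ℕ) : constantCoeff (Ups a) = 0 := by
  unfold Ups
  rw [map_sub, ← coeff_zero_eq_constantCoeff_apply, coeff_rescale]
  simp [coeff_zero_eq_constantCoeff_apply, constantCoeff_exp]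

lemma X_dvd_Ups (a : ℕ) : (X : ℚ⟦X⟧) ∣ Ups a :=
  PowerSeries.X_dvd_iff.mpr (constantCoeff_Ups a)

lemma derivative_rescale_exp (a : ℚ) :
    d⁄dX ℚ (rescale a (exp ℚ)) = a • rescale a (exp ℚ) := by
  ext n
  rw [coeff_derivative, coeff_rescale, map_smul, smul_eq_mul, coeff_rescale]
  rw [coeff_exp, coeff_exp]
  simp only [Algebra.algebraMap_self, RingHom.id_apply, smul_eq_mul]
  rw [Nat.factorial_succ]
  have h1 : ((n + 1 : ℕ) : ℚ) ≠ 0 := by exact_mod_cast Nat.succ_ne_zero n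
  have h2 : ((n.factorial : ℚ)) ≠ 0 := by exact_mod_cast Nat.factorial_ne_zero n
  field_simp
  push_cast
  ring

lemma derivative_Ups (a : ℕ) : d⁄dX ℚ (Ups a) = (a : ℚ) • (Ups a + 1) := by
  unfold Ups
  rw [map_sub, derivative_rescale_exp]
  simp

noncomputable def Lps (a n : ℕ) : ℚ⟦X⟧ :=
  ∑ k ∈ range (n + 1), ((-1) ^ k * ((k : ℚ) + 1)⁻¹) • (Ups a) ^ (k + 1)

lemma derivative_Lps (a n : ℕ) :
    d⁄dX ℚ (Lps a n) = (a : ℚ) • (1 - (- Ups a) ^ (n + 1)) := by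
  unfold Lps
  rw [map_sum]
  have h1 : ∀ k ∈ range (n + 1), d⁄dX ℚ (((-1) ^ k * ((k : ℚ) + 1)⁻¹) • (Ups a) ^ (k + 1))
      = (a : ℚ) • ((- Ups a) ^ k * (Ups a + 1)) := by
    intro k _
    rw [Derivation.map_smul, Derivation.leibniz_pow]
    rw [derivative_Ups]
    have hk : ((k : ℚ) + 1) ≠ 0 := by positivity
    have : (k + 1) • (Ups a ^ (k + 1 - 1) • ((a : ℚ) • (Ups a + 1)))
        = (((k : ℚ) + 1) * (a : ℚ)) • (Ups a ^ k * (Ups a + 1)) := by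
      simp only [Nat.add_sub_cancel, smul_eq_mul]
      rw [← Nat.cast_smul_eq_nsmul ℚ]
      push_cast
      rw [mul_smul_comm, smul_smul]
    have hsc : (-1 : ℚ) ^ k * ((k : ℚ) + 1)⁻¹ * (((k : ℚ) + 1) * (a : ℚ))
        = (a : ℚ) * (-1) ^ k := by
      field_simp
    rw [this, smul_smul, hsc, mul_smul]
    congr 1
    rw [PowerSeries.smul_eq_C_mul, neg_pow (Ups a) k]
    simp only [map_pow, map_neg, map_one]
    ring
  rw [Finset.sum_congr rfl h1, ← Finset.smul_sum, ← Finset.sum_mul]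
  congr 1
  have := geom_sum_mul (-(Ups a)) (n + 1)
  have h2 : (∑ i ∈ range (n + 1), (-Ups a) ^ i) * (Ups a + 1)
      = -((∑ i ∈ range (n + 1), (-Ups a) ^ i) * (-Ups a - 1)) := by ring
  rw [h2, this]
  ring

lemma X_pow_dvd_Lps_sub (a n : ℕ) :
    (X : ℚ⟦X⟧) ^ (n + 2) ∣ (Lps a n - (a : ℚ) • X) := by
  rw [PowerSeries.X_pow_dvd_iff]
  intro m hm
  rcases Nat.eq_zero_or_pos m with hm0 | hm0
  · subst hm0
    rw [map_sub, coeff_zero_eq_constantCoeff_apply, coeff_zero_eq_constantCoeff_apply]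
    unfold Lps
    rw [map_sum]
    have h1 : ∀ k ∈ range (n + 1),
        constantCoeff (((-1) ^ k * ((k : ℚ) + 1)⁻¹) • (Ups a) ^ (k + 1)) = 0 := by
      intro k _
      rw [PowerSeries.smul_eq_C_mul, map_mul, map_pow, constantCoeff_Ups]
      simp
    rw [Finset.sum_congr rfl h1]
    simp [constantCoeff_X]
  · obtain ⟨m', rfl⟩ := Nat.exists_eq_add_of_lt hm0
    rw [zero_add] at *
    have hd : coeff m' (d⁄dX ℚ (Lps a n - (a : ℚ) • X)) = 0 := by
      rw [map_sub, Derivation.map_smul, PowerSeries.derivative_X, derivative_Lps]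
      have hdvd : (X : ℚ⟦X⟧) ^ (n + 1) ∣ (- Ups a) ^ (n + 1) :=
        pow_dvd_pow_of_dvd ((X_dvd_Ups a).neg_right) (n + 1)
      have hz : coeff m' ((- Ups a) ^ (n + 1)) = 0 := by
        rw [PowerSeries.X_pow_dvd_iff] at hdvd
        exact hdvd m' (by omega)
      rw [map_sub, map_smul, map_smul, smul_eq_mul, smul_eq_mul, map_sub, hz, sub_zero]
      ring
    rw [coeff_derivative] at hd
    rcases mul_eq_zero.mp hd with h | h
    · exact h
    · exact absurd h (by exact_mod_cast Nat.succ_ne_zero m')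

lemma rescale_mul_exp_sub_one (c : ℕ) :
    rescale ((c : ℕ) : ℚ) (exp ℚ) * (exp ℚ - 1)
      = rescale (((c + 1 : ℕ) : ℚ)) (exp ℚ) - rescale ((c : ℕ) : ℚ) (exp ℚ) := by
  rw [mul_sub, mul_one, mul_comm, exp_mul_rescale]
  norm_num

lemma Ups_pow_mul_exp_sub_one (a k : ℕ) :
    (Ups a) ^ k * (exp ℚ - 1)
      = ∑ j ∈ range (k + 1), ((-1) ^ (k - j) * (k.choose j : ℚ)) •
          (rescale (((a * j + 1 : ℕ) : ℚ)) (exp ℚ) - rescale (((a * j : ℕ) : ℚ)) (exp ℚ)) := by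
  unfold Ups
  rw [sub_pow, Finset.sum_mul]
  refine Finset.sum_congr rfl fun j hj => ?_
  rw [mem_range, Nat.lt_succ_iff] at hj
  rw [rescale_exp_pow, one_pow, neg_one_pow_flip hj]
  have h1 : ((-1 : ℚ⟦X⟧)) ^ (k - j) = C ((-1 : ℚ) ^ (k - j)) := by simp
  have h2 : ((k.choose j : ℕ) : ℚ⟦X⟧) = C ((k.choose j : ℚ)) := by
    rw [← map_natCast (C (R := ℚ))]
  rw [h1, h2, PowerSeries.smul_eq_C_mul, map_mul]
  linear_combination (C ((-1 : ℚ) ^ (k - j)) * C ((k.choose j : ℚ))) * rescale_mul_exp_sub_one (a * j)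

lemma coeff_Ups_pow_mul (a n k : ℕ) :
    (n.factorial : ℚ) * coeff n ((Ups a) ^ k * (exp ℚ - 1)) = (genC n k a : ℚ) := by
  rw [Ups_pow_mul_exp_sub_one, map_sum, Finset.mul_sum]
  unfold genC
  push_cast
  refine Finset.sum_congr rfl fun j _ => ?_
  rw [map_smul, smul_eq_mul, map_sub, coeff_rescale, coeff_rescale, coeff_exp]
  simp only [Algebra.algebraMap_self, RingHom.id_apply]
  have h2 : ((n.factorial : ℚ)) ≠ 0 := by exact_mod_cast Nat.factorial_ne_zero n
  push_cast
  field_simp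

noncomputable def Mps (a n : ℕ) : ℚ⟦X⟧ :=
  ∑ k ∈ range (n + 1), ((-1) ^ k * ((k : ℚ) + 1)⁻¹) • (Ups a) ^ k

lemma coeff_main (a n : ℕ) (ha : 2 ≤ a) :
    coeff n ((a : ℚ) • (X * (Sps a)⁻¹)) = coeff n (Mps a n * (exp ℚ - 1)) := by
  have hS : constantCoeff (Sps a) ≠ 0 := by
    rw [constantCoeff_Sps]
    exact_mod_cast (by omega : a ≠ 0)
  have hSinv : (Sps a)⁻¹ * Sps a = 1 := PowerSeries.inv_mul_cancel _ hS
  have hSinv' : Sps a * (Sps a)⁻¹ = 1 := PowerSeries.mul_inv_cancel _ hS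
  set W : ℚ⟦X⟧ := (a : ℚ) • (X * (Sps a)⁻¹) - Mps a n * (exp ℚ - 1) with hW
  have hMU : Mps a n * (exp ℚ - 1) * Sps a = Lps a n := by
    rw [mul_assoc, exp_sub_one_mul_Sps]
    unfold Mps Lps
    rw [Finset.sum_mul]
    refine Finset.sum_congr rfl fun k _ => ?_
    rw [smul_mul_assoc, pow_succ]
  have hWS : W * Sps a = -(Lps a n - (a : ℚ) • X) := by
    rw [hW, sub_mul, hMU, smul_mul_assoc, mul_assoc, hSinv, mul_one]
    ring
  have hdvd : (X : ℚ⟦X⟧) ^ (n + 2) ∣ W := by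
    have hrw : W = (W * Sps a) * (Sps a)⁻¹ := by
      rw [mul_assoc, hSinv', mul_one]
    rw [hrw, hWS]
    exact ((dvd_neg.mpr (X_pow_dvd_Lps_sub a n)).mul_right _)
  have hcoeff := PowerSeries.X_pow_dvd_iff.mp hdvd n (by omega)
  rw [hW, map_sub, sub_eq_zero] at hcoeff
  exact hcoeff

theorem genGenocchi_isInt' (a : ℕ) (ha : 2 ≤ a) (n : ℕ) :
    ∃ m : ℤ, (n.factorial : ℚ) * coeff n
      ((a : ℚ) • (X * (∑ j ∈ range a, rescale (j : ℚ) (exp ℚ))⁻¹)) = (m : ℚ) := by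
  refine ⟨∑ k ∈ range (n + 1), (-1) ^ k * (genC n k a / ((k : ℤ) + 1)), ?_⟩
  have h0 : (∑ j ∈ range a, rescale (j : ℚ) (exp ℚ)) = Sps a := rfl
  rw [h0, coeff_main a n ha]
  unfold Mps
  rw [Finset.sum_mul, map_sum, Finset.mul_sum, Int.cast_sum]
  refine Finset.sum_congr rfl fun k _ => ?_
  rw [smul_mul_assoc, map_smul, smul_eq_mul]
  have hc := coeff_Ups_pow_mul a n k
  obtain ⟨d, hd⟩ := succ_dvd_genC n k a
  have hk : ((k : ℤ) + 1) ≠ 0 := by omega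
  have hdiv : genC n k a / ((k : ℤ) + 1) = d := by
    rw [hd, Int.mul_ediv_cancel_left d hk]
  rw [hdiv]
  have hkq : ((k : ℚ) + 1) ≠ 0 := by positivity
  have : (n.factorial : ℚ) * ((-1) ^ k * ((k : ℚ) + 1)⁻¹ * coeff n ((Ups a) ^ k * (exp ℚ - 1)))
      = (-1) ^ k * ((k : ℚ) + 1)⁻¹ * ((n.factorial : ℚ) * coeff n ((Ups a) ^ k * (exp ℚ - 1))) := by
    ring
  rw [this, hc, hd]
  push_cast
  field_simp

theorem genGenocchi_isInt (a : ℕ) (ha : 2 ≤ a) (n : ℕ) (hn : 0 < n) :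
    ∃ m : ℤ, genGenocchi n a = (m : ℚ) := by
  unfold genGenocchi
  exact genGenocchi_isInt' a ha n
end

section
/- Let f ∈ ℚ[[t]] be an IDC-series whose constant coefficient is nonzero. Then the multiplicative inverse f⁻¹ (the formal power series inverse in ℚ[[t]]) is an IDC-series if and only if the constant coefficient of f equals 1 or −1. -/
/-- A formal power series `f = ∑ aₙ tⁿ/n!` over `ℚ` is an IDC-series if all its
differential coefficients `aₙ = n! * (coeff n f)` are integers. -/
def IsIDC (f : PowerSeries ℚ) : Prop :=
  ∀ n : ℕ, ∃ m : ℤ, (Nat.factorial n : ℚ) * PowerSeries.coeff n f = (m : ℚ)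

theorem isIDC_inv_iff (f : PowerSeries ℚ) (hf : IsIDC f)
    (h0 : PowerSeries.constantCoeff f ≠ 0) :
    IsIDC f⁻¹ ↔ PowerSeries.constantCoeff f = 1 ∨ PowerSeries.constantCoeff f = -1 := by
  constructor
  · intro hinv
    obtain ⟨a, ha⟩ := hf 0
    obtain ⟨b, hb⟩ := hinv 0
    simp only [Nat.factorial_zero, Nat.cast_one, one_mul,
      PowerSeries.coeff_zero_eq_constantCoeff] at ha hb
    rw [PowerSeries.constantCoeff_inv] at hb
    have hab : (a : ℚ) * b = 1 := by
      rw [← ha, ← hb]; field_simp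
    have : a * b = 1 := by exact_mod_cast hab
    have := Int.isUnit_iff.mp (IsUnit.of_mul_eq_one (a := a) b this)
    rcases this with h1 | h1
    · left; rw [ha, h1]; norm_num
    · right; rw [ha, h1]; norm_num
  · intro h
    have hainv : (PowerSeries.constantCoeff f)⁻¹ ∈ (Int.castRingHom ℚ).range := by
      rcases h with h | h <;> rw [h]
      · exact ⟨1, by norm_num⟩
      · exact ⟨-1, by norm_num⟩
    have hS : ∀ n : ℕ, (Nat.factorial n : ℚ) * PowerSeries.coeff n f⁻¹ ∈
        (Int.castRingHom ℚ).range := by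
      intro n
      induction n using Nat.strong_induction_on with
      | _ n ih =>
        rcases Nat.eq_zero_or_pos n with rfl | hn
        · simp only [Nat.factorial_zero, Nat.cast_one, one_mul,
            PowerSeries.coeff_zero_eq_constantCoeff, PowerSeries.constantCoeff_inv]
          exact hainv
        · rw [PowerSeries.coeff_inv, if_neg hn.ne']
          set a := PowerSeries.constantCoeff f with ha_def
          set S := ∑ x ∈ Finset.HasAntidiagonal.antidiagonal n,
              (if x.2 < n then PowerSeries.coeff x.1 f * PowerSeries.coeff x.2 f⁻¹
               else 0) with hS_def
          rw [show (Nat.factorial n : ℚ) * (-a⁻¹ * S) = -(a⁻¹ * ((Nat.factorial n : ℚ) * S))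
            by ring]
          rw [hS_def, Finset.mul_sum]
          refine neg_mem (mul_mem hainv (Subring.sum_mem _ ?_))
          intro x hx
          rcases lt_or_ge x.2 n with hx2 | hx2
          · rw [if_pos hx2]
            have hsum : x.1 + x.2 = n := Finset.HasAntidiagonal.mem_antidiagonal.mp hx
            have hfact : (Nat.factorial n : ℚ) =
                (Nat.choose n x.2 : ℚ) * (Nat.factorial x.1 : ℚ) * (Nat.factorial x.2 : ℚ) := by
              rw [← hsum]
              exact_mod_cast (Nat.add_choose_mul_factorial_mul_factorial x.1 x.2).symm
            obtain ⟨m1, hm1⟩ := hf x.1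
            obtain ⟨m2, hm2⟩ := ih x.2 hx2
            simp only [eq_intCast] at hm2
            refine ⟨(Nat.choose n x.2 : ℤ) * m1 * m2, ?_⟩
            simp only [eq_intCast]
            push_cast
            rw [hfact, ← hm1, hm2]
            ring
          · rw [if_neg (not_lt.mpr hx2), mul_zero]
            exact zero_mem _
    intro n
    obtain ⟨m, hm⟩ := hS n
    exact ⟨m, by exact_mod_cast hm.symm⟩
end

section
/- Let f = ∑_{n≥0} a_n t^n/n! ∈ ℚ[[t]] be an IDC-series with a₀ ≠ 0, where a₀ is its constant coefficient. Then the formal power series a₀ • (rescale a₀ f)⁻¹, i.e., a₀/f(a₀ t), is also an IDC-series. -/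
theorem isIDC_smul_inv_rescale (f : PowerSeries ℚ) (hf : IsIDC f)
    (h0 : PowerSeries.constantCoeff f ≠ 0) :
    IsIDC ((PowerSeries.constantCoeff f) •
      (PowerSeries.rescale (PowerSeries.constantCoeff f) f)⁻¹) := by
  set a := PowerSeries.constantCoeff f with ha
  set h := PowerSeries.rescale a f with hh
  set g := a • h⁻¹ with hg
  have hah : PowerSeries.constantCoeff h = a := by
    rw [hh, ← PowerSeries.coeff_zero_eq_constantCoeff, PowerSeries.coeff_rescale]
    simp [ha]
  have hmul : h * g = a • 1 := by
    rw [hg, mul_smul_comm, PowerSeries.mul_inv_cancel _ (by rw [hah]; exact h0)]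
  have haZ : a ∈ (Int.castRingHom ℚ).range := by
    obtain ⟨m, hm⟩ := hf 0
    exact ⟨m, by simpa [ha] using hm.symm⟩
  have key : ∀ n : ℕ,
      (Nat.factorial n : ℚ) * PowerSeries.coeff n g ∈ (Int.castRingHom ℚ).range := by
    intro n
    induction n using Nat.strong_induction_on with
    | _ n ih =>
      match n with
      | 0 =>
        have hc : PowerSeries.coeff 0 g = 1 := by
          rw [hg, PowerSeries.coeff_smul, PowerSeries.coeff_zero_eq_constantCoeff,
            PowerSeries.constantCoeff_inv, hah]
          field_simp
          rw [smul_eq_mul, mul_one_div_cancel h0]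
        rw [hc]
        exact ⟨1, by simp⟩
      | Nat.succ n =>
        have h1 : (PowerSeries.coeff (n + 1)) (h * g) = 0 := by
          rw [hmul, PowerSeries.coeff_smul, PowerSeries.coeff_one]
          simp
        rw [PowerSeries.coeff_mul,
          Finset.Nat.sum_antidiagonal_eq_sum_range_succ_mk,
          Finset.sum_range_succ'] at h1
        -- h1 : ∑ i in range (n+1), coeff (i+1) h * coeff (n+1-(i+1)) g
        --        + coeff 0 h * coeff (n+1-0) g = 0
        set T : ℚ := ∑ i ∈ Finset.range (n + 1),
            (((n + 1).choose (i + 1) : ℚ)) * a ^ i *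
              ((Nat.factorial (i + 1) : ℚ) * PowerSeries.coeff (i + 1) f) *
              ((Nat.factorial (n - i) : ℚ) * PowerSeries.coeff (n - i) g) with hT
        have hmain : (Nat.factorial (n + 1) : ℚ) * PowerSeries.coeff (n + 1) g = -T := by
          apply mul_left_cancel₀ h0
          have h2 : a * PowerSeries.coeff (n + 1) g =
              -∑ i ∈ Finset.range (n + 1),
                PowerSeries.coeff (i + 1) h * PowerSeries.coeff (n - i) g := by
            have := h1
            rw [PowerSeries.coeff_zero_eq_constantCoeff, hah] at this
            simp only [Nat.add_sub_cancel, Nat.sub_zero] at this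
            have hnn : ∀ i ∈ Finset.range (n+1), n + 1 - (i + 1) = n - i := by
              intro i _; omega
            rw [Finset.sum_congr rfl (fun i hi => by rw [hnn i hi])] at this
            linarith [this]
          have h3 : a * ((Nat.factorial (n + 1) : ℚ) * PowerSeries.coeff (n + 1) g) =
              (Nat.factorial (n + 1) : ℚ) * (a * PowerSeries.coeff (n + 1) g) := by ring
          rw [h3, h2, mul_neg, mul_neg, neg_inj, hT, Finset.mul_sum, Finset.mul_sum]
          apply Finset.sum_congr rfl
          intro i hi
          rw [Finset.mem_range] at hi
          have hco : PowerSeries.coeff (i + 1) h = a ^ (i + 1) * PowerSeries.coeff (i + 1) f := by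
            rw [hh, PowerSeries.coeff_rescale]
          rw [hco]
          have hfact : (Nat.factorial (n + 1) : ℚ) =
              ((n + 1).choose (i + 1) : ℚ) * (Nat.factorial (i + 1) : ℚ) *
                (Nat.factorial (n - i) : ℚ) := by
            have := Nat.choose_mul_factorial_mul_factorial (by omega : i + 1 ≤ n + 1)
            have h3 : n + 1 - (i + 1) = n - i := by omega
            rw [h3] at this
            push_cast [← this]
            ring
          rw [hfact]
          ring
        rw [hmain]
        apply neg_mem
        apply sum_mem
        intro i hi
        rw [Finset.mem_range] at hi
        obtain ⟨m1, hm1⟩ := hf (i + 1)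
        have hig := ih (n - i) (by omega)
        apply mul_mem
        apply mul_mem
        apply mul_mem
        · exact ⟨((n + 1).choose (i + 1) : ℤ), by simp⟩
        · exact pow_mem haZ i
        · exact ⟨m1, hm1.symm⟩
        · exact hig
  intro n
  obtain ⟨m, hm⟩ := key n
  exact ⟨m, hm.symm⟩
end

section
/- Let f = ∑_{n≥0} a_n t^n/n! ∈ ℚ[[t]] be an IDC-series with a₀ ≠ 0, and write its formal inverse as f⁻¹ = ∑_{n≥0} b_n t^n/n! where b_n = n!·(coeff n of f⁻¹). Then for all n ∈ ℕ, the rational number a₀^{n+1}·b_n is an integer (equivalently, the denominator of b_n divides a₀^{n+1}). -/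
theorem denom_coeff_inv_dvd (f : PowerSeries ℚ) (hf : IsIDC f)
    (h0 : PowerSeries.constantCoeff f ≠ 0) (n : ℕ) :
    ∃ m : ℤ, (PowerSeries.constantCoeff f) ^ (n + 1) *
      ((Nat.factorial n : ℚ) * PowerSeries.coeff n f⁻¹) = (m : ℚ) := by
  set a := PowerSeries.constantCoeff f with ha
  set S : Subring ℚ := (Int.castRingHom ℚ).range with hSdef
  have memS : ∀ x : ℚ, x ∈ S ↔ ∃ m : ℤ, x = (m : ℚ) := by
    intro x
    constructor
    · rintro ⟨m, hm⟩; exact ⟨m, hm.symm⟩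
    · rintro ⟨m, hm⟩; exact ⟨m, hm.symm⟩
  have haS : a ∈ S := by
    obtain ⟨m, hm⟩ := hf 0
    exact ⟨m, by simpa using hm.symm⟩
  have hfS : ∀ i : ℕ, ((Nat.factorial i : ℚ) * PowerSeries.coeff i f) ∈ S := by
    intro i
    obtain ⟨m, hm⟩ := hf i
    exact ⟨m, hm.symm⟩
  have key : ∀ n : ℕ, a ^ (n + 1) *
      ((Nat.factorial n : ℚ) * PowerSeries.coeff n f⁻¹) ∈ S := by
    intro n
    induction n using Nat.strong_induction_on with
    | _ n ih =>
      match n with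
      | 0 =>
        have h1 : PowerSeries.coeff 0 f⁻¹ = a⁻¹ := by
          simp [PowerSeries.coeff_zero_eq_constantCoeff, ha]
        rw [memS]
        refine ⟨1, ?_⟩
        simp [h1, pow_one, mul_inv_cancel₀ h0]
      | (k + 1) =>
        rw [PowerSeries.coeff_inv]
        simp only [Nat.succ_ne_zero, if_false]
        have hrw : a ^ (k + 1 + 1) * ((Nat.factorial (k + 1) : ℚ) *
            (-(a)⁻¹ * ∑ x ∈ Finset.HasAntidiagonal.antidiagonal (k + 1),
              if x.2 < k + 1 then PowerSeries.coeff x.1 f * PowerSeries.coeff x.2 f⁻¹ else 0)) =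
            ∑ x ∈ Finset.HasAntidiagonal.antidiagonal (k + 1),
              (-(a ^ (k + 1) * (Nat.factorial (k + 1) : ℚ))) *
                (if x.2 < k + 1 then PowerSeries.coeff x.1 f * PowerSeries.coeff x.2 f⁻¹ else 0) := by
          rw [← Finset.mul_sum]
          field_simp
          ring
        rw [hrw]
        refine S.sum_mem fun x hx => ?_
        obtain ⟨i, j⟩ := x
        rw [Finset.HasAntidiagonal.mem_antidiagonal] at hx
        by_cases hj : j < k + 1
        · simp only [if_pos hj]
          have hij : i = k + 1 - j := by omega
          have hfact : (((k + 1).choose j : ℚ)) * (Nat.factorial j : ℚ) * (Nat.factorial i : ℚ)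
              = (Nat.factorial (k + 1) : ℚ) := by
            rw [hij]
            exact_mod_cast Nat.choose_mul_factorial_mul_factorial (by omega : j ≤ k + 1)
          have hpow : a ^ (k + 1) = a ^ (k - j) * a ^ (j + 1) := by
            rw [← pow_add]
            congr 1
            omega
          have heq : (-(a ^ (k + 1) * (Nat.factorial (k + 1) : ℚ))) *
              (PowerSeries.coeff i f * PowerSeries.coeff j f⁻¹) =
              -((((k + 1).choose j : ℚ)) * a ^ (k - j) *
                ((Nat.factorial i : ℚ) * PowerSeries.coeff i f) *
                (a ^ (j + 1) * ((Nat.factorial j : ℚ) * PowerSeries.coeff j f⁻¹))) := by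
            rw [hpow, ← hfact]
            ring
          rw [heq]
          refine S.neg_mem (S.mul_mem (S.mul_mem (S.mul_mem ?_ (S.pow_mem haS _)) (hfS i)) (ih j hj))
          exact ⟨((k + 1).choose j : ℤ), by simp⟩
        · simp only [if_neg hj, mul_zero]
          exact S.zero_mem
  rw [← memS]
  exact key n
end

section
/- Let a and n be positive integers with a ≥ 2, and let p be a prime number not dividing a. Then the p-adic valuation of the rational number G_{n,a} is nonnegative, i.e., G_{n,a} is a p-integer. -/
noncomputable def genGenocchiS (a : ℕ) : PowerSeries ℚ :=
  ∑ j ∈ Finset.range a, PowerSeries.rescale (j : ℚ) (PowerSeries.exp ℚ)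

lemma genGenocchiS_const (a : ℕ) : PowerSeries.constantCoeff (genGenocchiS a) = a := by
  have : PowerSeries.constantCoeff (genGenocchiS a) =
      PowerSeries.coeff 0 (genGenocchiS a) := by simp [PowerSeries.coeff_zero_eq_constantCoeff]
  rw [this, genGenocchiS, map_sum]
  simp [PowerSeries.coeff_rescale, PowerSeries.coeff_exp]

lemma genGenocchiS_coeff (a m : ℕ) :
    (m.factorial : ℚ) * PowerSeries.coeff m (genGenocchiS a)
      = ((∑ j ∈ Finset.range a, j ^ m : ℕ) : ℚ) := by
  rw [genGenocchiS, map_sum, Finset.mul_sum]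
  push_cast
  refine Finset.sum_congr rfl fun j hj => ?_
  rw [PowerSeries.coeff_rescale, PowerSeries.coeff_exp, Algebra.algebraMap_self, RingHom.id_apply]
  have : (m.factorial : ℚ) ≠ 0 := by exact_mod_cast m.factorial_ne_zero
  field_simp

lemma genGenocchi_conv (a : ℕ) (ha : 2 ≤ a) (n : ℕ) :
    ∑ k ∈ Finset.range (n + 1),
      (PowerSeries.coeff k ((a : ℚ) • (PowerSeries.X * (genGenocchiS a)⁻¹)))
        * PowerSeries.coeff (n - k) (genGenocchiS a)
      = if n = 1 then (a : ℚ) else 0 := by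
  have hS : PowerSeries.constantCoeff (genGenocchiS a) ≠ 0 := by
    rw [genGenocchiS_const]
    have : (0:ℚ) < a := by exact_mod_cast (by omega : 0 < a)
    exact ne_of_gt this
  have hmul : ((a : ℚ) • (PowerSeries.X * (genGenocchiS a)⁻¹)) * genGenocchiS a
      = (a : ℚ) • (PowerSeries.X : PowerSeries ℚ) := by
    rw [smul_mul_assoc, mul_assoc, PowerSeries.inv_mul_cancel _ hS, mul_one]
  have := congrArg (PowerSeries.coeff n) hmul
  rw [PowerSeries.coeff_mul, Finset.Nat.sum_antidiagonal_eq_sum_range_succ_mk] at this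
  rw [this, map_smul, PowerSeries.coeff_X, smul_eq_mul]
  split <;> simp_all

lemma genGenocchi_eq (n a : ℕ) : genGenocchi n a
    = (n.factorial : ℚ) * PowerSeries.coeff n ((a : ℚ) • (PowerSeries.X * (genGenocchiS a)⁻¹)) := rfl

lemma genGenocchi_rec (a : ℕ) (ha : 2 ≤ a) (n : ℕ) :
    (a : ℚ) * genGenocchi n a
      = (n.factorial : ℚ) * (if n = 1 then (a : ℚ) else 0)
        - ∑ k ∈ Finset.range n, (n.choose k : ℚ) * genGenocchi k a
            * ((∑ j ∈ Finset.range a, j ^ (n - k) : ℕ) : ℚ) := by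
  have hconv := genGenocchi_conv a ha n
  rw [Finset.sum_range_succ] at hconv
  have hc0 : PowerSeries.coeff (n - n) (genGenocchiS a) = (a : ℚ) := by
    simp [genGenocchiS_const, PowerSeries.coeff_zero_eq_constantCoeff]
  rw [hc0] at hconv
  have key : (a : ℚ) * genGenocchi n a
      = (n.factorial : ℚ) * (if n = 1 then (a : ℚ) else 0)
        - ∑ k ∈ Finset.range n, (n.factorial : ℚ) *
            ((PowerSeries.coeff k ((a : ℚ) • (PowerSeries.X * (genGenocchiS a)⁻¹)))
              * PowerSeries.coeff (n - k) (genGenocchiS a)) := by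
    rw [genGenocchi_eq, ← Finset.mul_sum]
    linear_combination ((n.factorial : ℚ)) * hconv
  rw [key]
  congr 1
  refine Finset.sum_congr rfl fun k hk => ?_
  have hkn : k ≤ n := le_of_lt (Finset.mem_range.mp hk)
  have hfac : (n.factorial : ℚ) = (n.choose k : ℚ) * (k.factorial : ℚ) * ((n - k).factorial : ℚ) := by
    exact_mod_cast (Nat.choose_mul_factorial_mul_factorial hkn).symm
  rw [hfac, genGenocchi_eq, ← genGenocchiS_coeff a (n - k)]
  ring

lemma genGenocchi_norm_le (a : ℕ) (ha : 2 ≤ a) (p : ℕ) (hp : p.Prime) (hpa : ¬ p ∣ a)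
    (n : ℕ) : padicNorm p (genGenocchi n a) ≤ 1 := by
  haveI := Fact.mk hp
  have hnat : ∀ m : ℕ, padicNorm p (m : ℚ) ≤ 1 := fun m => by
    simpa using padicNorm.of_int (p := p) (m : ℤ)
  have hA : padicNorm p (a : ℚ) = 1 := (padicNorm.nat_eq_one_iff a).mpr hpa
  induction n using Nat.strong_induction_on with
  | _ n ih =>
  have hrec := genGenocchi_rec a ha n
  have h1 : padicNorm p (genGenocchi n a) = padicNorm p ((a : ℚ) * genGenocchi n a) := by
    rw [padicNorm.mul, hA, one_mul]
  rw [h1, hrec]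
  refine le_trans padicNorm.sub (max_le ?_ ?_)
  · rw [padicNorm.mul]
    refine mul_le_one₀ (hnat _) (padicNorm.nonneg _) ?_
    split
    · exact le_of_eq hA
    · simp [padicNorm.zero]
  · refine padicNorm.sum_le' (fun k hk => ?_) zero_le_one
    rw [padicNorm.mul, padicNorm.mul]
    exact mul_le_one₀ (mul_le_one₀ (hnat _) (padicNorm.nonneg _) (ih k (Finset.mem_range.mp hk)))
      (padicNorm.nonneg _) (hnat _)

theorem padicValRat_genGenocchi_nonneg_of_not_dvd (a n : ℕ) (ha : 2 ≤ a) (hn : 0 < n)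
    (p : ℕ) (hp : p.Prime) (hpa : ¬ p ∣ a) :
    0 ≤ padicValRat p (genGenocchi n a) := by
  haveI := Fact.mk hp
  rcases eq_or_ne (genGenocchi n a) 0 with h | h
  · rw [h, padicValRat.zero]
  · have hle := genGenocchi_norm_le a ha p hp hpa n
    rw [padicNorm.eq_zpow_of_nonzero h] at hle
    by_contra hneg
    push_neg at hneg
    have hp1 : (1 : ℚ) < (p : ℚ) := by exact_mod_cast hp.one_lt
    have hpos : 0 < -padicValRat p (genGenocchi n a) := by omega
    have : (1 : ℚ) < (p : ℚ) ^ (-padicValRat p (genGenocchi n a)) :=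
      one_lt_zpow₀ hp1 hpos
    linarith
end

section
/- Let a ≥ 2 be an integer. Then for every positive integer n, the following identity holds among the generalized Genocchi numbers: G_{n,a} + ∑_{k=1}^{n−1} binom(n,k) · (a^k/(k+1)) · G_{n−k,a} = 1. -/
open PowerSeries Finset

lemma genS_mul_exp_sub_one (a : ℕ) :
    (∑ j ∈ range a, rescale (j : ℚ) (exp ℚ)) * (exp ℚ - 1)
      = rescale (a : ℚ) (exp ℚ) - 1 := by
  induction a with
  | zero => simp [rescale_zero]
  | succ a ih =>
    rw [sum_range_succ, add_mul, ih, mul_sub, mul_one]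
    have h : rescale (a : ℚ) (exp ℚ) * exp ℚ = rescale ((a : ℚ) + 1) (exp ℚ) := by
      have := exp_mul_exp_eq_exp_add (a : ℚ) 1
      rwa [rescale_one, RingHom.id_apply] at this
    rw [h]
    push_cast
    ring

lemma genS_constantCoeff (a : ℕ) :
    PowerSeries.constantCoeff (∑ j ∈ range a, rescale (j : ℚ) (exp ℚ)) = a := by
  rw [map_sum]
  have h : ∀ j ∈ range a, PowerSeries.constantCoeff (rescale (j : ℚ) (exp ℚ)) = 1 := by
    intro j _
    rw [← coeff_zero_eq_constantCoeff, coeff_rescale, pow_zero, one_mul,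
      coeff_zero_eq_constantCoeff, constantCoeff_exp]
  rw [Finset.sum_congr rfl h]
  simp

lemma genGenocchi_zero (a : ℕ) : genGenocchi 0 a = 0 := by
  simp [genGenocchi, coeff_zero_eq_constantCoeff]

theorem genGenocchi_recurrence (a : ℕ) (ha : 2 ≤ a) (n : ℕ) (hn : 0 < n) :
    genGenocchi n a + ∑ k ∈ Finset.Icc 1 (n - 1),
      (n.choose k : ℚ) * ((a : ℚ) ^ k / (k + 1)) * genGenocchi (n - k) a = 1 := by
  set S := ∑ j ∈ range a, rescale (j : ℚ) (exp ℚ) with hS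
  have hSc : PowerSeries.constantCoeff S ≠ 0 := by
    rw [hS, genS_constantCoeff]
    exact_mod_cast (by omega : a ≠ 0)
  set G : PowerSeries ℚ := (a : ℚ) • (X * S⁻¹) with hG
  set F : PowerSeries ℚ := PowerSeries.mk fun k => (a : ℚ) ^ k / ((k + 1) * k.factorial) with hF
  have ha0 : (a : ℚ) ≠ 0 := by exact_mod_cast (by omega : a ≠ 0)
  have hXF : (a : ℚ) • (X * F) = rescale (a : ℚ) (exp ℚ) - 1 := by
    ext m
    rcases m with _ | m
    · simp only [map_smul, map_sub, coeff_zero_eq_constantCoeff, map_mul, constantCoeff_X,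
        zero_mul, smul_zero, constantCoeff_one]
      rw [← coeff_zero_eq_constantCoeff, coeff_rescale, pow_zero, one_mul,
        coeff_zero_eq_constantCoeff, constantCoeff_exp]
      norm_num
    · rw [map_smul, coeff_succ_X_mul, map_sub, coeff_rescale, coeff_exp]
      simp only [hF, coeff_mk, coeff_one, Nat.succ_ne_zero, if_false,
        eq_ratCast, Rat.cast_div, Rat.cast_one]
      have hm : ((m : ℚ) + 1) ≠ 0 := by positivity
      have hmf : (m.factorial : ℚ) ≠ 0 := Nat.cast_ne_zero.mpr m.factorial_ne_zero
      rw [Nat.factorial_succ]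
      push_cast
      field_simp
      have hD : ((m : ℚ) + 1) * m.factorial ≠ 0 := mul_ne_zero hm hmf
      rw [smul_eq_mul, mul_zero, sub_zero, mul_left_comm, mul_div_cancel₀ _ hD, pow_succ, mul_comm]
  have hGF : G * F = exp ℚ - 1 := by
    have h1 : G * F = S⁻¹ * ((a : ℚ) • (X * F)) := by
      rw [hG, smul_mul_assoc, mul_smul_comm]
      ring_nf
    rw [h1, hXF, ← genS_mul_exp_sub_one a, ← hS, ← mul_assoc,
      PowerSeries.inv_mul_cancel S hSc, one_mul]
  have key : ∑ k ∈ range (n + 1),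
      (n.choose k : ℚ) * ((a : ℚ) ^ k / (k + 1)) * genGenocchi (n - k) a = 1 := by
    have h1 : (PowerSeries.coeff n) (G * F) = ∑ k ∈ range (n + 1),
        PowerSeries.coeff k F * PowerSeries.coeff (n - k) G := by
      rw [mul_comm, PowerSeries.coeff_mul]
      exact Finset.Nat.sum_antidiagonal_eq_sum_range_succ
        (fun i j => PowerSeries.coeff i F * PowerSeries.coeff j G) n
    have h2 : (PowerSeries.coeff n) (G * F) = 1 / n.factorial := by
      rw [hGF, map_sub, coeff_exp]
      obtain ⟨m, rfl⟩ := Nat.exists_eq_add_of_lt hn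
      simp
    have h3 : (n.factorial : ℚ) ≠ 0 := Nat.cast_ne_zero.mpr n.factorial_ne_zero
    have h4 : ∀ k ∈ range (n + 1),
        (n.factorial : ℚ) * (PowerSeries.coeff k F * PowerSeries.coeff (n - k) G)
          = (n.choose k : ℚ) * ((a : ℚ) ^ k / (k + 1)) * genGenocchi (n - k) a := by
      intro k hk
      rw [mem_range, Nat.lt_succ_iff] at hk
      have hch : (n.choose k : ℚ) * k.factorial * (n - k).factorial = n.factorial := by
        exact_mod_cast congrArg (Nat.cast : ℕ → ℚ) (Nat.choose_mul_factorial_mul_factorial hk)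
      rw [hF]
      simp only [coeff_mk]
      rw [genGenocchi, ← hS, ← hG]
      have hk1 : ((k : ℚ) + 1) ≠ 0 := by positivity
      have hkf : (k.factorial : ℚ) ≠ 0 := Nat.cast_ne_zero.mpr k.factorial_ne_zero
      have hnkf : ((n - k).factorial : ℚ) ≠ 0 := Nat.cast_ne_zero.mpr (n - k).factorial_ne_zero
      rw [← hch]
      field_simp
    calc ∑ k ∈ range (n + 1), (n.choose k : ℚ) * ((a : ℚ) ^ k / (k + 1)) * genGenocchi (n - k) a
        = ∑ k ∈ range (n + 1),
            (n.factorial : ℚ) * (PowerSeries.coeff k F * PowerSeries.coeff (n - k) G) :=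
          (Finset.sum_congr rfl h4).symm
      _ = (n.factorial : ℚ) * (PowerSeries.coeff n) (G * F) := by rw [h1, Finset.mul_sum]
      _ = 1 := by rw [h2]; field_simp
  obtain ⟨m, rfl⟩ := Nat.exists_eq_add_of_lt hn
  simp only [zero_add] at key ⊢
  rw [Finset.sum_range_succ, Nat.sub_self, genGenocchi_zero, mul_zero, add_zero,
    Finset.sum_range_succ'] at key
  simp only [Nat.choose_zero_right, Nat.cast_one, pow_zero, Nat.cast_zero, zero_add, div_one,
    one_mul, Nat.sub_zero] at key
  rw [show m + 1 - 1 = m from rfl,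
    show Finset.Icc 1 m = Finset.Ico 1 (m + 1) from (Finset.Ico_add_one_right_eq_Icc 1 m).symm,
    Finset.sum_Ico_eq_sum_range]
  simp only [Nat.add_sub_cancel]
  rw [add_comm] at key
  refine Eq.trans ?_ key
  congr 1
  exact Finset.sum_congr rfl fun k _ => by rw [add_comm 1 k]
end

section
/- Let a and n be positive integers with a ≥ 2, and let p be a prime number dividing a. Then the p-adic valuation of the rational number G_{n,a} is nonnegative, i.e., G_{n,a} is a p-integer. -/
open PowerSeries Finset in
private lemma genGenocchi_series_eq (a : ℕ) (ha : 0 < a) :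
    (a : ℚ) • (PowerSeries.X *
        (∑ j ∈ Finset.range a, PowerSeries.rescale (j : ℚ) (PowerSeries.exp ℚ))⁻¹)
      = rescale (a : ℚ) (bernoulliPowerSeries ℚ) * (exp ℚ - 1) := by
  set S : PowerSeries ℚ := ∑ j ∈ Finset.range a, rescale (j : ℚ) (exp ℚ) with hSdef
  have hSexp : S = ∑ j ∈ Finset.range a, (exp ℚ) ^ j :=
    Finset.sum_congr rfl fun j _ => (exp_pow_eq_rescale_exp j).symm
  have hS : constantCoeff S ≠ 0 := by
    have : constantCoeff S = a := by
      rw [hSexp, map_sum]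
      simp [constantCoeff_exp]
    rw [this]
    exact_mod_cast ha.ne'
  have hgeom : (exp ℚ - 1) * S = rescale (a : ℚ) (exp ℚ) - 1 := by
    rw [hSexp, mul_comm, geom_sum_mul, exp_pow_eq_rescale_exp]
  have key : (a : ℚ) • (X : PowerSeries ℚ) =
      rescale (a : ℚ) (bernoulliPowerSeries ℚ) * (exp ℚ - 1) * S := by
    rw [mul_assoc, hgeom, ← map_one (rescale (a : ℚ)), ← map_sub, ← map_mul,
      bernoulliPowerSeries_mul_exp_sub_one, rescale_X, smul_eq_C_mul]
  calc (a : ℚ) • ((X : PowerSeries ℚ) * S⁻¹)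
      = ((a : ℚ) • (X : PowerSeries ℚ)) * S⁻¹ := by rw [smul_mul_assoc]
    _ = rescale (a : ℚ) (bernoulliPowerSeries ℚ) * (exp ℚ - 1) * (S * S⁻¹) := by
        rw [key]; ring
    _ = _ := by rw [PowerSeries.mul_inv_cancel S hS, mul_one]

open PowerSeries Finset in
private lemma genGenocchi_eq_sum (a n : ℕ) (ha : 0 < a) :
    genGenocchi n a = ∑ x ∈ Finset.HasAntidiagonal.antidiagonal n,
      (Nat.factorial n : ℚ) * (((a : ℚ) ^ x.1 * (bernoulli x.1 / x.1.factorial)) *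
        (1 / x.2.factorial - if x.2 = 0 then 1 else 0)) := by
  rw [genGenocchi, genGenocchi_series_eq a ha, coeff_mul, Finset.mul_sum]
  refine Finset.sum_congr rfl fun x hx => ?_
  congr 1
  rw [coeff_rescale]
  congr 1
  · congr 1
    simp [bernoulliPowerSeries, coeff_mk]
  · rw [map_sub, coeff_exp, coeff_one]
    simp

private lemma padicNorm_le_one_iff {p : ℕ} [hp : Fact p.Prime] {x : ℚ} (hx : x ≠ 0) :
    padicNorm p x ≤ 1 ↔ 0 ≤ padicValRat p x := by
  rw [padicNorm, if_neg hx]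
  have hp1 : (1 : ℚ) < p := by exact_mod_cast hp.out.one_lt
  constructor
  · intro h
    by_contra hneg
    push_neg at hneg
    have : (1 : ℚ) < (p : ℚ) ^ (-padicValRat p x) := one_lt_zpow₀ hp1 (by omega)
    linarith
  · intro h
    exact zpow_le_one_of_nonpos₀ (le_of_lt hp1) (by omega)

private lemma padicNorm_pow_div_le_one {p : ℕ} [hp : Fact p.Prime] (m : ℕ) :
    padicNorm p ((p : ℚ) ^ m / ((m + 1 : ℕ) : ℚ)) ≤ 1 := by
  have hp1 : 1 < p := hp.out.one_lt
  have hppos : (0 : ℚ) < p := by exact_mod_cast hp.out.pos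
  have hmq : ((m + 1 : ℕ) : ℚ) ≠ 0 := by exact_mod_cast Nat.succ_ne_zero m
  have hx : (p : ℚ) ^ m / ((m + 1 : ℕ) : ℚ) ≠ 0 := by positivity
  have hv : padicValNat p (m + 1) ≤ m := by
    have h2 : p ^ padicValNat p (m + 1) ≤ m + 1 :=
      Nat.le_of_dvd (Nat.succ_pos m) pow_padicValNat_dvd
    have h3 : m + 1 < p ^ (m + 1) := Nat.lt_pow_self (n := m + 1) hp1
    have := (Nat.pow_lt_pow_iff_right hp1).mp (lt_of_le_of_lt h2 h3)
    omega
  rw [padicNorm_le_one_iff hx,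
    padicValRat.div (by positivity) hmq,
    padicValRat.pow _, padicValRat.self hp1]
  have : padicValRat p ((m + 1 : ℕ) : ℚ) = (padicValNat p (m + 1) : ℤ) := by
    rw [padicValRat.of_nat]
  rw [this]
  have : (padicValNat p (m + 1) : ℤ) ≤ (m : ℤ) := by exact_mod_cast hv
  linarith

private lemma padicNorm_pow_mul_bernoulli' {p : ℕ} [hp : Fact p.Prime] (k : ℕ) :
    padicNorm p ((p : ℚ) ^ k * bernoulli' k) ≤ 1 := by
  induction k using Nat.strong_induction_on with
  | _ n ih =>
    rw [bernoulli'_def, mul_sub, mul_one, Finset.mul_sum]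
    refine padicNorm.sub.trans (max_le ?_ ?_)
    · have h : ((p : ℚ) ^ n) = ((p ^ n : ℕ) : ℚ) := by push_cast; ring
      rw [h]
      exact padicNorm.of_nat _
    · refine padicNorm.sum_le' (fun k hk => ?_) zero_le_one
      rw [Finset.mem_range] at hk
      have hcast : (n : ℚ) - (k : ℚ) + 1 = (((n - k) + 1 : ℕ) : ℚ) := by
        push_cast [Nat.cast_sub hk.le]; ring
      have heq : (p : ℚ) ^ n * ((n.choose k : ℚ) / ((n : ℚ) - (k : ℚ) + 1) * bernoulli' k)
          = (n.choose k : ℚ) * ((p : ℚ) ^ (n - k) / (((n - k) + 1 : ℕ) : ℚ))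
            * ((p : ℚ) ^ k * bernoulli' k) := by
        rw [← hcast]
        have hpow : (p : ℚ) ^ n = (p : ℚ) ^ (n - k) * (p : ℚ) ^ k := by
          rw [← pow_add]; congr 1; omega
        rw [hpow]; ring
      rw [heq, padicNorm.mul, padicNorm.mul]
      have h1 := padicNorm.of_nat (p := p) (n.choose k)
      have h2 := padicNorm_pow_div_le_one (p := p) (n - k)
      have h3 := ih k hk
      exact mul_le_one₀ (mul_le_one₀ h1 (padicNorm.nonneg _) h2) (padicNorm.nonneg _) h3

private lemma padicNorm_pow_mul_bernoulli {p : ℕ} [hp : Fact p.Prime] (k : ℕ) :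
    padicNorm p ((p : ℚ) ^ k * bernoulli k) ≤ 1 := by
  rw [bernoulli]
  rcases neg_one_pow_eq_or ℚ k with h | h <;> rw [h]
  · simpa using padicNorm_pow_mul_bernoulli' (p := p) k
  · rw [show (p : ℚ) ^ k * (-1 * bernoulli' k) = -((p : ℚ) ^ k * bernoulli' k) by ring,
      padicNorm.neg]
    exact padicNorm_pow_mul_bernoulli' (p := p) k

private lemma padicNorm_apow_mul_bernoulli {p a : ℕ} [hp : Fact p.Prime] (hpa : p ∣ a) (k : ℕ) :
    padicNorm p ((a : ℚ) ^ k * bernoulli k) ≤ 1 := by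
  obtain ⟨c, rfl⟩ := hpa
  have h : ((p * c : ℕ) : ℚ) ^ k * bernoulli k
      = ((c ^ k : ℕ) : ℚ) * ((p : ℚ) ^ k * bernoulli k) := by push_cast; ring
  rw [h, padicNorm.mul]
  exact mul_le_one₀ (padicNorm.of_nat _) (padicNorm.nonneg _)
    (padicNorm_pow_mul_bernoulli (p := p) k)

theorem padicValRat_genGenocchi_nonneg_of_dvd (a n : ℕ) (ha : 2 ≤ a) (hn : 0 < n)
    (p : ℕ) (hp : p.Prime) (hpa : p ∣ a) :
    0 ≤ padicValRat p (genGenocchi n a) := by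
  haveI := Fact.mk hp
  by_cases hG : genGenocchi n a = 0
  · rw [hG, padicValRat.zero]
  rw [← padicNorm_le_one_iff hG, genGenocchi_eq_sum a n (by omega)]
  refine padicNorm.sum_le' (fun x hx => ?_) zero_le_one
  rw [Finset.HasAntidiagonal.mem_antidiagonal] at hx
  by_cases hj : x.2 = 0
  · simp [hj, padicNorm.zero]
  · have hne : (1 : ℚ) / x.2.factorial - (if x.2 = 0 then (1:ℚ) else 0) = 1 / x.2.factorial := by
      rw [if_neg hj]; ring
    have hfac : (n.choose x.2 : ℚ) * x.1.factorial * x.2.factorial = n.factorial := by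
      have := Nat.add_choose_mul_factorial_mul_factorial x.1 x.2
      rw [hx] at this
      exact_mod_cast this
    have hf1 : (x.1.factorial : ℚ) ≠ 0 := by exact_mod_cast x.1.factorial_ne_zero
    have hf2 : (x.2.factorial : ℚ) ≠ 0 := by exact_mod_cast x.2.factorial_ne_zero
    have heq : (n.factorial : ℚ) * (((a : ℚ) ^ x.1 * (bernoulli x.1 / x.1.factorial)) *
          (1 / x.2.factorial))
        = (n.choose x.2 : ℚ) * ((a : ℚ) ^ x.1 * bernoulli x.1) := by
      rw [← hfac]; field_simp
    rw [hne, heq, padicNorm.mul]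
    exact mul_le_one₀ (padicNorm.of_nat _) (padicNorm.nonneg _)
      (padicNorm_apow_mul_bernoulli hpa _)
end

section
/- For every natural number n, the polynomial 𝒢_n(X) = ∑_{k=0}^{n−1} binom(n,k)·B_k·X^k ∈ ℚ[X] is integer-valued: for every integer x, the value ∑_{k=0}^{n−1} binom(n,k)·B_k·x^k is an integer. -/
open Finset

lemma sum_is_int {α : Type*} (s : Finset α) (f : α → ℚ)
    (h : ∀ a ∈ s, ∃ m : ℤ, f a = m) : ∃ m : ℤ, ∑ a ∈ s, f a = m := by
  classical
  induction s using Finset.induction with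
  | empty => exact ⟨0, by simp⟩
  | insert _ _ ha ih =>
    obtain ⟨m1, hm1⟩ := h _ (Finset.mem_insert_self _ _)
    obtain ⟨m2, hm2⟩ := ih (fun a has => h a (Finset.mem_insert_of_mem has))
    exact ⟨m1 + m2, by rw [Finset.sum_insert ha, hm1, hm2, Int.cast_add]⟩

lemma sum_coprime_clear {α : Type*} (X : ℕ) (s : Finset α) (f : α → ℚ)
    (h : ∀ a ∈ s, ∃ e : ℕ, Nat.Coprime e X ∧ ∃ m : ℤ, (e : ℚ) * f a = m) :
    ∃ e : ℕ, Nat.Coprime e X ∧ ∃ m : ℤ, (e : ℚ) * ∑ a ∈ s, f a = m := by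
  classical
  induction s using Finset.induction with
  | empty => exact ⟨1, Nat.coprime_one_left _, 0, by simp⟩
  | @insert a s ha ih =>
    obtain ⟨e1, he1, m1, hm1⟩ := h _ (Finset.mem_insert_self _ _)
    obtain ⟨e2, he2, m2, hm2⟩ := ih (fun a has => h a (Finset.mem_insert_of_mem has))
    refine ⟨e1 * e2, Nat.Coprime.mul he1 he2, e2 * m1 + e1 * m2, ?_⟩
    rw [Finset.sum_insert ha]
    push_cast
    rw [mul_add, show (e1 : ℚ) * e2 * f a = e2 * ((e1:ℚ) * f a) by ring, hm1,
        show (e1 : ℚ) * e2 * (∑ x ∈ s, f x) = e1 * ((e2:ℚ) * ∑ x ∈ s, f x) by ring, hm2]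

lemma factorial_mul_bernoulli_int (k : ℕ) :
    ∃ m : ℤ, ((k + 1).factorial : ℚ) * bernoulli k = m := by
  induction k using Nat.strong_induction_on with
  | _ k IH =>
    have h := sum_bernoulli (k + 1)
    rw [Finset.sum_range_succ, Nat.choose_succ_self_right] at h
    have hsum : ∃ m : ℤ, ∑ i ∈ Finset.range k,
        (Nat.factorial k : ℚ) * (((k+1).choose i : ℚ) * bernoulli i) = m := by
      apply sum_is_int
      intro i hi
      rw [Finset.mem_range] at hi
      obtain ⟨mi, hmi⟩ := IH i hi
      refine ⟨(((k+1).choose i * (k.factorial / (i+1).factorial) : ℕ) : ℤ) * mi, ?_⟩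
      have hdvd : Nat.factorial (i + 1) ∣ Nat.factorial k :=
        Nat.factorial_dvd_factorial hi
      have hq : ((Nat.factorial k / Nat.factorial (i+1) : ℕ) : ℚ) * (Nat.factorial (i+1) : ℚ)
          = (Nat.factorial k : ℚ) := by
        rw [← Nat.cast_mul, Nat.div_mul_cancel hdvd]
      rw [Int.cast_mul, Int.cast_natCast, ← hmi, Nat.cast_mul, ← hq]
      ring
    obtain ⟨m, hm⟩ := hsum
    refine ⟨(Nat.factorial k : ℤ) * (if k + 1 = 1 then 1 else 0) - m, ?_⟩
    have hfac : ((k+1).factorial : ℚ) = (k+1) * (Nat.factorial k : ℚ) := by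
      push_cast [Nat.factorial_succ]; ring
    have h2 : ((k:ℚ)+1) * bernoulli k
        = (if k + 1 = 1 then 1 else 0) - ∑ i ∈ Finset.range k, (((k+1).choose i : ℚ) * bernoulli i) := by
      push_cast at h ⊢
      linarith [h]
    have h3 : ((k+1).factorial : ℚ) * bernoulli k
        = (Nat.factorial k : ℚ) * (((k:ℚ)+1) * bernoulli k) := by rw [hfac]; ring
    have hite : (((if k + 1 = 1 then 1 else 0) : ℤ) : ℚ) = (if k + 1 = 1 then (1:ℚ) else 0) := by
      split <;> simp
    rw [h3, h2, mul_sub, Finset.mul_sum, hm, Int.cast_sub, Int.cast_mul, Int.cast_natCast, hite]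

lemma geom_div_le (p m : ℕ) (hp : 2 ≤ p) :
    ∀ b : ℕ, ∑ i ∈ Finset.Ico 1 (b+1), m / p ^ i ≤ m - m / p ^ b := by
  intro b
  induction b with
  | zero => simp
  | succ b ih =>
    rw [Finset.sum_Ico_succ_top (by omega)]
    have h1 : m / p ^ (b+1) = (m / p ^ b) / p := by
      rw [pow_succ, Nat.div_div_eq_div_mul]
    have h2 : m / p ^ (b+1) + m / p ^ (b+1) ≤ m / p ^ b := by
      rw [h1]
      have := Nat.div_mul_le_self (m / p ^ b) p
      have h3 : (m / p ^ b) / p * 2 ≤ (m / p ^ b) / p * p := by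
        exact Nat.mul_le_mul_left _ hp
      omega
    have h4 : m / p ^ b ≤ m := Nat.div_le_self _ _
    omega

lemma factorization_factorial_le (p k : ℕ) (hp : p.Prime) :
    (Nat.factorial (k+1)).factorization p ≤ k := by
  by_contra hcon
  push_neg at hcon
  have hdvd : p ^ (k+1) ∣ (k+1).factorial :=
    (Nat.Prime.pow_dvd_iff_le_factorization hp (Nat.factorial_ne_zero _)).mpr hcon
  set b := Nat.log p (k+1) with hb
  have hlt : Nat.log p (k+1) < b + 1 := Nat.lt_succ_self _
  have hsum := (Nat.Prime.pow_dvd_factorial_iff hp hlt).mp hdvd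
  have hge := geom_div_le p (k+1) hp.two_le b
  have hpow : p ^ b ≤ k + 1 := Nat.pow_log_le_self p (by omega)
  have hquot : 0 < (k+1) / p ^ b := Nat.div_pos hpow (pow_pos hp.pos b)
  have h5 : k + 1 ≤ k + 1 - (k+1) / p ^ b := le_trans hsum hge
  have h6 : k + 1 - (k+1) / p ^ b < k + 1 := Nat.sub_lt (by omega) hquot
  omega

lemma term_clear (k X : ℕ) (hX : X ≠ 0) :
    ∃ e : ℕ, Nat.Coprime e X ∧ ∃ m : ℤ, (e : ℚ) * (bernoulli k * (X:ℚ) ^ k) = m := by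
  set d := (k+1).factorial with hd
  set g := d.gcd (X ^ k) with hg
  have hdne : d ≠ 0 := Nat.factorial_ne_zero _
  have hXk : X ^ k ≠ 0 := pow_ne_zero _ hX
  have hgd : g ∣ d := Nat.gcd_dvd_left _ _
  have hgX : g ∣ X ^ k := Nat.gcd_dvd_right _ _
  have hgne : g ≠ 0 := Nat.gcd_ne_zero_left hdne
  set e := d / g with he
  have hed : e * g = d := Nat.div_mul_cancel hgd
  have hene : e ≠ 0 := by
    intro h0; rw [h0, zero_mul] at hed; exact hdne hed.symm
  refine ⟨e, ?_, ?_⟩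
  · -- Coprimality
    rw [Nat.coprime_iff_gcd_eq_one]
    by_contra hne
    obtain ⟨p, hp, hpdvd⟩ := Nat.exists_prime_and_dvd hne
    have hpe : p ∣ e := hpdvd.trans (Nat.gcd_dvd_left _ _)
    have hpX : p ∣ X := hpdvd.trans (Nat.gcd_dvd_right _ _)
    -- p ^ (d.factorization p) divides both d and X^k, hence divides g
    have h1 : (d.factorization p) ≤ k := factorization_factorial_le p k hp
    have h2 : p ^ (d.factorization p) ∣ d := Nat.ordProj_dvd _ _
    have h3 : p ^ (d.factorization p) ∣ X ^ k :=
      dvd_trans (pow_dvd_pow p h1) (pow_dvd_pow_of_dvd hpX k)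
    have h4 : p ^ (d.factorization p) ∣ g := Nat.dvd_gcd h2 h3
    have h5 : d.factorization p ≤ g.factorization p :=
      (Nat.Prime.pow_dvd_iff_le_factorization hp hgne).mp h4
    have h6 : e.factorization p + g.factorization p = d.factorization p := by
      have := Nat.factorization_mul hene hgne
      have h7 : (e * g).factorization p = d.factorization p := by rw [hed]
      rw [this] at h7
      simpa using h7
    have h8 : 0 < e.factorization p := Nat.Prime.factorization_pos_of_dvd hp hene hpe
    omega
  · -- Integrality
    obtain ⟨mk, hmk⟩ := factorial_mul_bernoulli_int k
    set q := X ^ k / g with hq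
    have hqg : q * g = X ^ k := Nat.div_mul_cancel hgX
    refine ⟨mk * q, ?_⟩
    have hcast : (e : ℚ) * ((X:ℚ) ^ k) = (d : ℚ) * (q:ℚ) := by
      have h1 : ((X:ℚ)) ^ k = ((X ^ k : ℕ) : ℚ) := by push_cast; ring
      rw [h1, ← hqg, ← hed]
      push_cast; ring
    push_cast
    calc (e : ℚ) * (bernoulli k * (X:ℚ) ^ k)
        = ((e : ℚ) * (X:ℚ) ^ k) * bernoulli k := by ring
      _ = ((d:ℚ) * (q:ℚ)) * bernoulli k := by rw [hcast]
      _ = ((d:ℚ) * bernoulli k) * q := by ring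
      _ = (mk : ℚ) * q := by rw [← hmk]

lemma choose_aux {n i j : ℕ} (hj : j ≤ n) :
    n.choose (n-j) * (n-j).choose i = n.choose i * (n-i).choose j := by
  rcases le_or_gt (i+j) n with h | h
  · have h1 : i ≤ n - j := by omega
    rw [Nat.choose_mul h1]
    congr 1
    have h2 : n - j - i = (n - i) - j := by omega
    rw [h2, Nat.choose_symm (by omega : j ≤ n - i)]
  · rw [Nat.choose_eq_zero_of_lt (by omega : n - j < i), mul_zero]
    rcases le_or_gt i n with hi | hi
    · rw [Nat.choose_eq_zero_of_lt (by omega : n - i < j), mul_zero]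
    · rw [Nat.choose_eq_zero_of_lt hi, zero_mul]

lemma bsum_inner (n i a : ℕ) :
    ∑ k ∈ range (n+1), (n.choose k : ℚ) * (k.choose i : ℚ) * (a:ℚ)^(n-k)
      = (n.choose i : ℚ) * ((a:ℚ)+1)^(n-i) := by
  have hrhs : ((a:ℚ)+1)^(n-i) = ∑ j ∈ range (n-i+1), (a:ℚ)^j * (n-i).choose j := by
    rw [add_pow]
    exact Finset.sum_congr rfl (fun j _ => by rw [one_pow]; ring)
  have hext : (n.choose i : ℚ) * ((a:ℚ)+1)^(n-i)
      = ∑ j ∈ range (n+1), (n.choose i : ℚ) * ((a:ℚ)^j * ((n-i).choose j : ℚ)) := by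
    rw [hrhs, Finset.mul_sum]
    exact Finset.sum_subset (Finset.range_subset_range.mpr (by omega : n-i+1 ≤ n+1))
      (fun j _ hj => by
        rw [Finset.mem_range, not_lt] at hj
        rw [Nat.choose_eq_zero_of_lt (by omega : n - i < j)]
        simp)
  rw [hext, ← Finset.sum_range_reflect]
  apply Finset.sum_congr rfl
  intro j hj
  rw [Finset.mem_range] at hj
  have h1 : n + 1 - 1 - j = n - j := by omega
  have h2 : n - (n - j) = j := by omega
  rw [h1, h2]
  rw [← Nat.cast_mul, choose_aux (by omega : j ≤ n), Nat.cast_mul]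
  ring

lemma step1 (n X a : ℕ) :
    ∑ k ∈ range (n+1), (n.choose k : ℚ) *
        (∑ i ∈ range k, (k.choose i : ℚ) * bernoulli i * (X:ℚ)^i) * (a:ℚ)^(n-k)
    = (∑ i ∈ range (n+1), (n.choose i : ℚ) * bernoulli i * (X:ℚ)^i * ((a:ℚ)+1)^(n-i))
      - ∑ i ∈ range (n+1), (n.choose i : ℚ) * bernoulli i * (X:ℚ)^i * (a:ℚ)^(n-i) := by
  have h1a : ∀ k ∈ range (n+1),
      (∑ i ∈ range k, (k.choose i : ℚ) * bernoulli i * (X:ℚ)^i)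
      = (∑ i ∈ range (n+1), (k.choose i : ℚ) * bernoulli i * (X:ℚ)^i)
        - bernoulli k * (X:ℚ)^k := by
    intro k hk
    rw [Finset.mem_range] at hk
    have hfull : (∑ i ∈ range (n+1), (k.choose i : ℚ) * bernoulli i * (X:ℚ)^i)
        = ∑ i ∈ range (k+1), (k.choose i : ℚ) * bernoulli i * (X:ℚ)^i := by
      rw [← Finset.sum_subset (Finset.range_subset_range.mpr (by omega : k+1 ≤ n+1))
        (fun i _ hi => by
          rw [Finset.mem_range, not_lt] at hi
          rw [Nat.choose_eq_zero_of_lt (by omega : k < i)]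
          simp)]
    rw [hfull, Finset.sum_range_succ, Nat.choose_self]
    push_cast
    ring
  rw [Finset.sum_congr rfl (fun k hk => by rw [h1a k hk])]
  have hsplit : ∀ k ∈ range (n+1), (n.choose k : ℚ) *
      ((∑ i ∈ range (n+1), (k.choose i : ℚ) * bernoulli i * (X:ℚ)^i)
        - bernoulli k * (X:ℚ)^k) * (a:ℚ)^(n-k)
      = (∑ i ∈ range (n+1),
          (n.choose k : ℚ) * (k.choose i : ℚ) * (a:ℚ)^(n-k) * (bernoulli i * (X:ℚ)^i))
        - (n.choose k : ℚ) * bernoulli k * (X:ℚ)^k * (a:ℚ)^(n-k) := by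
    intro k _
    have hexp : (n.choose k : ℚ) *
        ((∑ i ∈ range (n+1), (k.choose i : ℚ) * bernoulli i * (X:ℚ)^i)
          - bernoulli k * (X:ℚ)^k) * (a:ℚ)^(n-k)
        = ((n.choose k : ℚ) * (a:ℚ)^(n-k)) *
            (∑ i ∈ range (n+1), (k.choose i : ℚ) * bernoulli i * (X:ℚ)^i)
          - (n.choose k : ℚ) * bernoulli k * (X:ℚ)^k * (a:ℚ)^(n-k) := by ring
    rw [hexp, Finset.mul_sum]
    congr 1
    exact Finset.sum_congr rfl (fun i _ => by ring)
  rw [Finset.sum_congr rfl hsplit, Finset.sum_sub_distrib]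
  congr 1
  rw [Finset.sum_comm]
  apply Finset.sum_congr rfl
  intro i _
  have : ∀ k ∈ range (n+1),
      (n.choose k : ℚ) * (k.choose i : ℚ) * (a:ℚ)^(n-k) * (bernoulli i * (X:ℚ)^i)
      = ((n.choose k : ℚ) * (k.choose i : ℚ) * (a:ℚ)^(n-k)) * (bernoulli i * (X:ℚ)^i) := by
    intro k _; ring
  rw [Finset.sum_congr rfl this, ← Finset.sum_mul, bsum_inner n i a]
  ring

lemma key_identity (n X : ℕ) :
    ∑ k ∈ range (n+1), (n.choose k : ℚ) *
        (∑ i ∈ range k, (k.choose i : ℚ) * bernoulli i * (X:ℚ)^i) *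
        (∑ a ∈ range X, (a:ℚ)^(n-k))
    = (X:ℚ)^n * (if n = 1 then 1 else 0) := by
  set V : ℚ → ℚ := fun y =>
    ∑ i ∈ range (n+1), (n.choose i : ℚ) * bernoulli i * (X:ℚ)^i * y^(n-i) with hV
  have hmain : ∑ k ∈ range (n+1), (n.choose k : ℚ) *
        (∑ i ∈ range k, (k.choose i : ℚ) * bernoulli i * (X:ℚ)^i) *
        (∑ a ∈ range X, (a:ℚ)^(n-k)) = V (X:ℚ) - V ((0:ℕ):ℚ) := by
    have hswap : ∑ k ∈ range (n+1), (n.choose k : ℚ) *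
        (∑ i ∈ range k, (k.choose i : ℚ) * bernoulli i * (X:ℚ)^i) *
        (∑ a ∈ range X, (a:ℚ)^(n-k))
      = ∑ a ∈ range X, ∑ k ∈ range (n+1), (n.choose k : ℚ) *
        (∑ i ∈ range k, (k.choose i : ℚ) * bernoulli i * (X:ℚ)^i) * (a:ℚ)^(n-k) := by
      rw [Finset.sum_comm]
      exact Finset.sum_congr rfl (fun k _ => by rw [Finset.mul_sum])
    rw [hswap]
    have hterm : ∀ a ∈ range X, ∑ k ∈ range (n+1), (n.choose k : ℚ) *
        (∑ i ∈ range k, (k.choose i : ℚ) * bernoulli i * (X:ℚ)^i) * (a:ℚ)^(n-k)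
        = V (((a+1 : ℕ)):ℚ) - V ((a:ℕ):ℚ) := by
      intro a _
      have hc : (((a+1:ℕ)):ℚ) = (a:ℚ) + 1 := by push_cast; ring
      rw [hc]
      exact step1 n X a
    rw [Finset.sum_congr rfl hterm]
    exact Finset.sum_range_sub (fun m : ℕ => V ((m:ℕ):ℚ)) X
  rw [hmain]
  have hVX : V (X:ℚ) = ((if n = 1 then 1 else 0) + bernoulli n) * (X:ℚ)^n := by
    rw [hV]
    simp only
    have : ∀ i ∈ range (n+1), (n.choose i : ℚ) * bernoulli i * (X:ℚ)^i * (X:ℚ)^(n-i)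
        = ((n.choose i : ℚ) * bernoulli i) * (X:ℚ)^n := by
      intro i hi
      rw [Finset.mem_range] at hi
      rw [mul_assoc, ← pow_add]
      congr 2
      omega
    rw [Finset.sum_congr rfl this, ← Finset.sum_mul, Finset.sum_range_succ, sum_bernoulli,
        Nat.choose_self]
    push_cast
    ring
  have hV0 : V ((0:ℕ):ℚ) = bernoulli n * (X:ℚ)^n := by
    rw [hV]
    simp only [Nat.cast_zero]
    rw [Finset.sum_range_succ, Nat.choose_self, Nat.sub_self]
    rw [Finset.sum_eq_zero (fun i hi => by
      rw [Finset.mem_range] at hi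
      rw [zero_pow (by omega : n - i ≠ 0), mul_zero])]
    norm_num
  rw [hVX, hV0]
  ring

lemma bernoulli_odd_zero {k : ℕ} (hk : Odd k) (h1 : 1 < k) : bernoulli k = 0 := by
  rw [bernoulli_eq_bernoulli'_of_ne_one (by omega)]
  exact bernoulli'_eq_zero_of_odd hk h1

/-- reduction of negative arguments: S_n(-y) = S_n(y) + n*y for n ≥ 2 -/
lemma neg_arg (n : ℕ) (hn : 2 ≤ n) (y : ℚ) :
    ∑ k ∈ Finset.range n, (n.choose k : ℚ) * bernoulli k * (-y) ^ k
    = (∑ k ∈ Finset.range n, (n.choose k : ℚ) * bernoulli k * y ^ k) + n * y := by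
  have hdiff : ∑ k ∈ Finset.range n,
      ((n.choose k : ℚ) * bernoulli k * (-y) ^ k - (n.choose k : ℚ) * bernoulli k * y ^ k)
      = n * y := by
    rw [Finset.sum_eq_single_of_mem 1 (Finset.mem_range.mpr (by omega))]
    · rw [Nat.choose_one_right, bernoulli_one]
      push_cast
      ring
    · intro k _ hk1
      rcases Nat.even_or_odd k with he | ho
      · rw [he.neg_pow, sub_self]
      · rcases Nat.lt_or_ge k 2 with h2 | h2
        · interval_cases k
          · simp at ho
          · exact absurd rfl hk1
        · rw [bernoulli_odd_zero ho (by omega)]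
          ring
  rw [← hdiff, Finset.sum_sub_distrib]
  ring

theorem genocchiPoly_integer_valued (n : ℕ) (x : ℤ) :
    ∃ m : ℤ, ∑ k ∈ Finset.range n, (n.choose k : ℚ) * bernoulli k * (x : ℚ) ^ k = (m : ℚ) := by
  induction n using Nat.strong_induction_on generalizing x with
  | _ n IH =>
  rcases Nat.eq_zero_or_pos n with rfl | hn0
  · exact ⟨0, by simp⟩
  have hpos : ∀ X : ℕ, X ≠ 0 →
      ∃ m : ℤ, ∑ k ∈ Finset.range n, (n.choose k : ℚ) * bernoulli k * (X:ℚ) ^ k = (m : ℚ) := by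
    intro X hX
    have hid := key_identity n X
    rw [Finset.sum_range_succ, Nat.choose_self] at hid
    have hP0 : ∑ a ∈ range X, (a:ℚ)^(n-n) = (X:ℚ) := by
      rw [Nat.sub_self]
      simp
    rw [hP0] at hid
    obtain ⟨A, hA⟩ : ∃ A : ℤ, ∑ k ∈ range n, (n.choose k : ℚ) *
        (∑ i ∈ range k, (k.choose i : ℚ) * bernoulli i * (X:ℚ)^i) *
        (∑ a ∈ range X, (a:ℚ)^(n-k)) = (A : ℚ) := by
      apply sum_is_int
      intro k hk
      rw [Finset.mem_range] at hk
      obtain ⟨mk, hmk⟩ := IH k hk (X : ℤ)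
      have hmk' : ∑ i ∈ range k, (k.choose i : ℚ) * bernoulli i * (X:ℚ)^i = (mk:ℚ) := by
        rw [← hmk]
        apply Finset.sum_congr rfl
        intro i _
        push_cast
        ring
      refine ⟨(n.choose k : ℤ) * mk * ((∑ a ∈ range X, a^(n-k) : ℕ) : ℤ), ?_⟩
      rw [hmk']
      have hN : ∑ a ∈ range X, (a:ℚ)^(n-k) = ((∑ a ∈ range X, a^(n-k) : ℕ) : ℚ) := by
        push_cast
        rfl
      rw [hN]
      push_cast
      ring
    -- (X:ℚ) * S_n = A2
    set S : ℚ := ∑ k ∈ Finset.range n, (n.choose k : ℚ) * bernoulli k * (X:ℚ) ^ k with hS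
    have hid2 : (X:ℚ) * S = (X:ℚ)^n * (if n = 1 then 1 else 0) - A := by
      rw [← hA]
      linear_combination hid
    set A2 : ℤ := (if n = 1 then (X:ℤ)^n else 0) - A with hA2
    have hXS : (X:ℚ) * S = (A2 : ℚ) := by
      rw [hid2, hA2]
      split_ifs <;> push_cast <;> ring
    -- coprime clearing
    obtain ⟨e, hcop, C, hC⟩ : ∃ e : ℕ, Nat.Coprime e X ∧ ∃ C : ℤ, (e:ℚ) * S = C := by
      apply sum_coprime_clear
      intro k _
      obtain ⟨e, hcop, mk, hmk⟩ := term_clear k X hX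
      refine ⟨e, hcop, (n.choose k : ℤ) * mk, ?_⟩
      rw [show (e:ℚ) * ((n.choose k : ℚ) * bernoulli k * (X:ℚ) ^ k)
          = (n.choose k : ℚ) * ((e:ℚ) * (bernoulli k * (X:ℚ)^k)) by ring, hmk]
      push_cast
      ring
    have hco : IsCoprime (X:ℤ) (e:ℤ) := (Nat.isCoprime_iff_coprime.mpr hcop).symm
    obtain ⟨u, v, huv⟩ := hco
    refine ⟨u * A2 + v * C, ?_⟩
    have hq : (u:ℚ) * (X:ℚ) + (v:ℚ) * (e:ℚ) = 1 := by
      have := congrArg (fun z : ℤ => (z : ℚ)) huv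
      push_cast at this
      convert this using 2 <;> push_cast <;> ring
    calc S = ((u:ℚ) * (X:ℚ) + (v:ℚ) * (e:ℚ)) * S := by rw [hq, one_mul]
      _ = (u:ℚ) * ((X:ℚ) * S) + (v:ℚ) * ((e:ℚ) * S) := by ring
      _ = (u:ℚ) * (A2:ℚ) + (v:ℚ) * (C:ℚ) := by rw [hXS, hC]
      _ = ((u * A2 + v * C : ℤ) : ℚ) := by push_cast; ring
  -- dispatch on the sign of x
  rcases lt_trichotomy x 0 with hx | rfl | hx
  · rcases Nat.lt_or_ge n 2 with h2 | h2
    · have hn1 : n = 1 := by omega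
      subst hn1
      exact ⟨1, by simp⟩
    · obtain ⟨m, hm⟩ := hpos (-x).toNat (by omega)
      have hy : (((-x).toNat : ℕ) : ℚ) = -(x:ℚ) := by
        have h1 : ((-x).toNat : ℤ) = -x := Int.toNat_of_nonneg (by omega)
        exact_mod_cast congrArg (fun z : ℤ => (z:ℚ)) h1
      rw [hy] at hm
      refine ⟨m - n * x, ?_⟩
      have h1 : (x:ℚ) = -(-(x:ℚ)) := by ring
      rw [h1, neg_arg n h2 (-(x:ℚ)), hm]
      push_cast
      ring
  · refine ⟨1, ?_⟩
    rw [Finset.sum_eq_single_of_mem 0 (Finset.mem_range.mpr hn0)]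
    · simp
    · intro k _ hk
      rw [Int.cast_zero, zero_pow hk, mul_zero]
  · obtain ⟨m, hm⟩ := hpos x.toNat (by omega)
    have hy : ((x.toNat : ℕ) : ℚ) = (x:ℚ) := by
      have h1 : (x.toNat : ℤ) = x := Int.toNat_of_nonneg (by omega)
      exact_mod_cast congrArg (fun z : ℤ => (z:ℚ)) h1
    rw [hy] at hm
    exact ⟨m, hm⟩
end

section
/- For every odd integer n ≥ 3, the reciprocal polynomial of the Bernoulli polynomial B_n(X) is integer-valued: for every integer x, the value of (Polynomial.bernoulli n).reverse at x is an integer. -/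
open Finset

namespace RevBern

/-- Alternating difference numbers: `A j k = ∑ (-1)^i C(j,i) i^k`. -/
def A (j k : ℕ) : ℤ := ∑ i ∈ range (j+1), (-1)^i * (j.choose i) * (i:ℤ)^k

lemma A_rec (j k : ℕ) :
    A (j+1) (k+1) = -((j:ℤ)+1) * ∑ s ∈ range (k+1), (k.choose s : ℤ) * A j s := by
  have hRHS : -((j:ℤ)+1) * ∑ s ∈ range (k+1), (k.choose s : ℤ) * A j s
      = ∑ i ∈ range (j+1), (-((j:ℤ)+1) * ((-1)^i * (j.choose i))) *
          ∑ s ∈ range (k+1), (k.choose s : ℤ) * (i:ℤ)^s := by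
    unfold A
    rw [mul_sum]
    have : ∀ s ∈ range (k+1), -((j:ℤ)+1) * ((k.choose s : ℤ) * ∑ i ∈ range (j+1), (-1)^i * (j.choose i) * (i:ℤ)^s)
        = ∑ i ∈ range (j+1), (-((j:ℤ)+1) * ((-1)^i * (j.choose i)) * ((k.choose s : ℤ) * (i:ℤ)^s)) := by
      intro s _
      rw [mul_sum, mul_sum]
      exact sum_congr rfl fun i _ => by ring
    rw [sum_congr rfl this, Finset.sum_comm]
    exact sum_congr rfl fun i _ => by rw [mul_sum]
  rw [hRHS]
  unfold A
  rw [Finset.sum_range_succ']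
  simp only [pow_zero, Nat.cast_zero, one_mul, Nat.choose_zero_right, Nat.cast_one, mul_one,
    zero_pow (Nat.succ_ne_zero k), mul_zero, add_zero]
  refine sum_congr rfl fun i _ => ?_
  have h2 : ((j:ℤ)+1) * (j.choose i : ℤ) = ((j+1).choose (i+1) : ℤ) * ((i:ℤ)+1) := by
    exact_mod_cast congrArg (Nat.cast : ℕ → ℤ) (Nat.add_one_mul_choose_eq j i)
  have h1 : ((i:ℤ)+1)^k = ∑ s ∈ range (k+1), (k.choose s : ℤ) * (i:ℤ)^s := by
    rw [add_pow]
    exact sum_congr rfl fun s _ => by rw [one_pow]; ring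
  have hc : ((i:ℕ)+1 : ℤ) = (i:ℤ)+1 := by push_cast; ring
  push_cast
  calc (-1:ℤ)^(i+1) * ((j+1).choose (i+1) : ℤ) * ((i:ℤ)+1)^(k+1)
      = -((-1)^i * (((j+1).choose (i+1) : ℤ) * ((i:ℤ)+1)) * ((i:ℤ)+1)^k) := by ring
    _ = -((-1)^i * (((j:ℤ)+1) * (j.choose i : ℤ)) * ((i:ℤ)+1)^k) := by rw [← h2]
    _ = (-((j:ℤ)+1) * ((-1)^i * (j.choose i))) * (∑ s ∈ range (k+1), (k.choose s : ℤ) * (i:ℤ)^s) := by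
        rw [← h1]; ring


lemma A_zero_right (j : ℕ) : A (j+1) 0 = 0 := by
  have h := Int.alternating_sum_range_choose_of_ne (n := j+1) (Nat.succ_ne_zero j)
  rw [← h]
  unfold A
  exact sum_congr rfl fun i _ => by rw [pow_zero, mul_one]

lemma A_eq_zero : ∀ k j : ℕ, k < j → A j k = 0 := by
  intro k
  induction k using Nat.strong_induction_on with
  | _ k ih =>
    intro j hj
    rcases k with _ | k
    · rcases j with _ | j
      · omega
      · exact A_zero_right j
    · rcases j with _ | j
      · omega
      rw [A_rec]
      have : ∑ s ∈ range (k+1), (k.choose s : ℤ) * A j s = 0 := by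
        refine Finset.sum_eq_zero fun s hs => ?_
        have hs' := mem_range.mp hs
        rw [ih s (by omega) j (by omega), mul_zero]
      rw [this, mul_zero]

lemma factorial_dvd_A : ∀ k j : ℕ, (j.factorial : ℤ) ∣ A j k := by
  intro k
  induction k using Nat.strong_induction_on with
  | _ k ih =>
    intro j
    rcases k with _ | k
    · rcases j with _ | j
      · exact one_dvd _
      · rw [A_zero_right j]; exact dvd_zero _
    · rcases j with _ | j
      · exact one_dvd _
      rw [A_rec]
      have : (j.factorial : ℤ) ∣ ∑ s ∈ range (k+1), (k.choose s : ℤ) * A j s :=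
        Finset.dvd_sum fun s hs => Dvd.dvd.mul_left (ih s (by have := mem_range.mp hs; omega) j) _
      obtain ⟨c, hc⟩ := this
      refine ⟨-c, ?_⟩
      rw [hc, Nat.factorial_succ]
      push_cast
      ring


lemma inversion (k m : ℕ) :
    (m:ℤ)^k = ∑ j ∈ range (m+1), (m.choose j : ℤ) * (-1)^j * A j k := by
  -- replace A's inner range by range (m+1)
  have hA : ∀ j ∈ range (m+1),
      (m.choose j : ℤ) * (-1)^j * A j k
        = ∑ i ∈ range (m+1), (m.choose j : ℤ) * (-1)^j * ((-1)^i * (j.choose i) * (i:ℤ)^k) := by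
    intro j hj
    have hjm := mem_range.mp hj
    unfold A
    rw [mul_sum]
    refine Finset.sum_subset (by intro i hi; exact mem_range.mpr (by have := mem_range.mp hi; omega)) ?_
    intro i _ hi
    have : j < i := by by_contra h; exact hi (mem_range.mpr (by omega))
    rw [Nat.choose_eq_zero_of_lt this]
    push_cast
    ring
  rw [sum_congr rfl hA, Finset.sum_comm]
  have hinner : ∀ i ∈ range (m+1),
      ∑ j ∈ range (m+1), (m.choose j : ℤ) * (-1)^j * ((-1)^i * (j.choose i) * (i:ℤ)^k)
        = if i = m then (m:ℤ)^k else 0 := by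
    intro i hi
    have him := Nat.lt_succ_iff.mp (mem_range.mp hi)
    have h1 : ∑ j ∈ range (m+1), (m.choose j : ℤ) * (-1)^j * ((-1)^i * (j.choose i) * (i:ℤ)^k)
        = ∑ j ∈ Ico i (m+1), (m.choose j : ℤ) * (-1)^j * ((-1)^i * (j.choose i) * (i:ℤ)^k) := by
      rw [range_eq_Ico]
      refine (Finset.sum_subset (Finset.Ico_subset_Ico (Nat.zero_le i) le_rfl) ?_).symm
      intro j _ hj
      have : j < i := by
        rcases mem_Ico.mp ‹j ∈ Ico 0 (m+1)› with ⟨_, h2⟩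
        by_contra h
        exact hj (mem_Ico.mpr ⟨by omega, h2⟩)
      rw [Nat.choose_eq_zero_of_lt this]
      push_cast
      ring
    rw [h1, Finset.sum_Ico_eq_sum_range]
    have h2 : ∀ d ∈ range (m+1-i),
        (m.choose (i+d) : ℤ) * (-1)^(i+d) * ((-1)^i * ((i+d).choose i) * (i:ℤ)^k)
          = (m.choose i : ℤ) * (i:ℤ)^k * ((-1)^d * ((m-i).choose d)) := by
      intro d hd
      have hdm : i + d ≤ m := by have := mem_range.mp hd; omega
      have hmc : (m.choose (i+d) : ℤ) * ((i+d).choose i : ℤ) = (m.choose i : ℤ) * ((m-i).choose d : ℤ) := by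
        have := Nat.choose_mul (n := m) (Nat.le_add_right i d)
        rw [Nat.add_sub_cancel_left] at this
        exact_mod_cast congrArg (Nat.cast : ℕ → ℤ) this
      have hone : ((-1:ℤ))^i * (-1)^i = 1 := by
        rw [← pow_add, ← two_mul, pow_mul]
        norm_num
      have hpa : ((-1:ℤ))^(i+d) = (-1)^i * (-1)^d := pow_add (-1) i d
      rw [hpa]
      linear_combination ((-1:ℤ))^d * (-1)^i * (-1)^i * (i:ℤ)^k * hmc + (m.choose i : ℤ) * ((m-i).choose d : ℤ) * (-1)^d * (i:ℤ)^k * hone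
    rw [sum_congr rfl h2, ← mul_sum]
    have h4 : m + 1 - i = (m - i) + 1 := by omega
    rw [h4]
    rw [show (∑ d ∈ range ((m-i)+1), ((-1:ℤ))^d * ((m-i).choose d)) = if m - i = 0 then 1 else 0 from Int.alternating_sum_range_choose]
    by_cases h : i = m
    · subst h
      simp
    · have : ¬ (m - i = 0) := by omega
      simp [this, h]
  rw [sum_congr rfl hinner, Finset.sum_ite_eq' (range (m+1)) m fun _ => (m:ℤ)^k]
  simp


lemma inversion' (k m : ℕ) :
    (m:ℤ)^k = ∑ j ∈ range (k+1), (m.choose j : ℤ) * (-1)^j * A j k := by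
  rw [inversion k m]
  set f : ℕ → ℤ := fun j => (m.choose j : ℤ) * (-1)^j * A j k with hf
  have big : ∀ N, m + 1 ≤ N → k + 1 ≤ N → ∑ j ∈ range (m+1), f j = ∑ j ∈ range N, f j ∧
      ∑ j ∈ range (k+1), f j = ∑ j ∈ range N, f j := by
    intro N h1 h2
    constructor
    · refine Finset.sum_subset (by intro t ht; exact mem_range.mpr (by have := mem_range.mp ht; omega)) ?_
      intro j _ hj
      have : m < j := by by_contra h; exact hj (mem_range.mpr (by omega))
      simp [hf, Nat.choose_eq_zero_of_lt this]
    · refine Finset.sum_subset (by intro t ht; exact mem_range.mpr (by have := mem_range.mp ht; omega)) ?_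
      intro j _ hj
      have : k < j := by by_contra h; exact hj (mem_range.mpr (by omega))
      simp [hf, A_eq_zero k j this]
  obtain ⟨e1, e2⟩ := big (max (m+1) (k+1)) (le_max_left _ _) (le_max_right _ _)
  rw [e1, e2]

lemma sum_pow_eq (k m : ℕ) :
    ∑ i ∈ range m, (i:ℤ)^k = ∑ j ∈ range (k+1), (-1)^j * A j k * (m.choose (j+1)) := by
  induction m with
  | zero =>
    simp [Nat.choose_eq_zero_of_lt (Nat.succ_pos _)]
  | succ m ihm =>
    rw [Finset.sum_range_succ, ihm]
    have hpascal : ∀ j, ((m+1).choose (j+1) : ℤ) = (m.choose (j+1) : ℤ) + (m.choose j : ℤ) := by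
      intro j
      rw [Nat.choose_succ_succ]
      push_cast
      ring
    have : ∑ j ∈ range (k+1), (-1:ℤ)^j * A j k * ((m+1).choose (j+1))
        = ∑ j ∈ range (k+1), ((-1:ℤ)^j * A j k * (m.choose (j+1)) + (m.choose j : ℤ) * (-1)^j * A j k) := by
      refine sum_congr rfl fun j _ => ?_
      rw [hpascal j]
      ring
    rw [this, Finset.sum_add_distrib, ← inversion']


open Polynomial in
lemma dp_coeff_zero (j : ℕ) : (descPochhammer ℚ (j+1)).coeff 0 = 0 := by
  rw [Polynomial.coeff_zero_eq_eval_zero]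
  have := descPochhammer_eval_eq_descFactorial ℚ 0 (j+1)
  simpa [Nat.zero_descFactorial_succ] using this

open Polynomial in
lemma dp_coeff_one (j : ℕ) : (descPochhammer ℚ (j+1)).coeff 1 = (-1)^j * (j.factorial : ℚ) := by
  induction j with
  | zero => simp [descPochhammer_one]
  | succ j ih =>
    rw [descPochhammer_succ_right]
    have hcn : ((j+1 : ℕ) : ℚ[X]) = C ((j:ℚ)+1) := by push_cast; simp
    rw [hcn, mul_sub, coeff_sub]
    rw [show (1:ℕ) = 0 + 1 from rfl, coeff_mul_X, dp_coeff_zero, coeff_mul_C, ih,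
      Nat.factorial_succ]
    push_cast
    ring


open Polynomial in
lemma worpitzky (k : ℕ) :
    _root_.bernoulli k = ∑ j ∈ range (k+1), (A j k : ℚ) / ((j:ℚ)+1) := by
  set P₁ : ℚ[X] := ∑ i ∈ range (k+1),
    C (_root_.bernoulli i * ((k+1).choose i) / ((k:ℚ)+1)) * X^(k+1-i) with hP1
  set P₂ : ℚ[X] := ∑ j ∈ range (k+1),
    C (((-1)^j * (A j k : ℚ)) / ((j+1).factorial : ℚ)) * descPochhammer ℚ (j+1) with hP2
  have heval : ∀ m : ℕ, P₁.eval (m:ℚ) = P₂.eval (m:ℚ) := by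
    intro m
    have e1 : P₁.eval (m:ℚ)
        = ∑ i ∈ range (k+1), _root_.bernoulli i * ((k+1).choose i) * (m:ℚ)^(k+1-i) / ((k:ℚ)+1) := by
      rw [hP1, eval_finset_sum]
      exact sum_congr rfl fun i _ => by rw [eval_mul, eval_C, eval_pow, eval_X]; ring
    have e2 : P₂.eval (m:ℚ) = ∑ j ∈ range (k+1), (-1:ℚ)^j * (A j k : ℚ) * (m.choose (j+1) : ℚ) := by
      rw [hP2, eval_finset_sum]
      refine sum_congr rfl fun j _ => ?_
      rw [eval_mul, eval_C, descPochhammer_eval_eq_descFactorial,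
        Nat.descFactorial_eq_factorial_mul_choose]
      have hfne : ((j+1).factorial : ℚ) ≠ 0 := by
        exact_mod_cast Nat.factorial_ne_zero (j+1)
      push_cast
      push_cast at hfne
      field_simp
    have e3 : ∑ i ∈ range m, (i:ℚ)^k = ∑ j ∈ range (k+1), (-1:ℚ)^j * (A j k : ℚ) * (m.choose (j+1) : ℚ) := by
      have h := congrArg (Int.cast : ℤ → ℚ) (sum_pow_eq k m)
      push_cast at h
      exact h
    have e4 := sum_range_pow m k
    have e1' : P₁.eval (m:ℚ) = ∑ i ∈ range m, (i:ℚ)^k := by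
      rw [e1, e4]
    rw [e1', e2, e3]
  have hPP : P₁ = P₂ := by
    refine Polynomial.eq_of_infinite_eval_eq _ _ ?_
    exact Set.infinite_of_injective_forall_mem (f := (Nat.cast : ℕ → ℚ))
      Nat.cast_injective (fun m => heval m)
  have c1 : P₁.coeff 1 = _root_.bernoulli k := by
    rw [hP1, finset_sum_coeff]
    rw [Finset.sum_eq_single k]
    · have h1 : k + 1 - k = 1 := by omega
      rw [coeff_C_mul, h1, coeff_X_pow]
      have : ((k:ℚ)+1) ≠ 0 := by positivity
      simp only [if_pos rfl, Nat.choose_succ_self_right, if_true, mul_one]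
      push_cast
      try rw [mul_div_assoc, div_self this, mul_one]
    · intro i hi hik
      have hikk : i < k := by have := mem_range.mp hi; omega
      have : ¬ ((1:ℕ) = k + 1 - i) := by omega
      rw [coeff_C_mul, coeff_X_pow, if_neg this, mul_zero]
    · intro h
      exact absurd (self_mem_range_succ k) h
  have c2 : P₂.coeff 1 = ∑ j ∈ range (k+1), (A j k : ℚ) / ((j:ℚ)+1) := by
    rw [hP2, finset_sum_coeff]
    refine sum_congr rfl fun j _ => ?_
    rw [coeff_C_mul, dp_coeff_one]
    have hone : ((-1:ℚ))^j * (-1)^j = 1 := by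
      rw [← pow_add, ← two_mul, pow_mul]
      norm_num
    have hfj : (j.factorial : ℚ) ≠ 0 := by exact_mod_cast Nat.factorial_ne_zero j
    have hj1 : ((j:ℚ)+1) ≠ 0 := by positivity
    rw [Nat.factorial_succ]
    push_cast
    field_simp
    ring_nf
    have hsq : ((-1:ℚ))^(j*2) = 1 := by rw [pow_mul, sq, hone]
    rw [hsq]
    ring
  rw [← c1, hPP, c2]


/-- `T n x j = ∑ (-1)^i C(j,i) (1+ix)^n`. -/
def T (n : ℕ) (x : ℤ) (j : ℕ) : ℤ :=
  ∑ i ∈ range (j+1), (-1)^i * (j.choose i) * (1 + (i:ℤ)*x)^n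

lemma T_eq_sum_A (n : ℕ) (x : ℤ) (j : ℕ) :
    T n x j = ∑ k ∈ range (n+1), (n.choose k : ℤ) * x^k * A j k := by
  unfold T A
  have h1 : ∀ i ∈ range (j+1), (-1:ℤ)^i * (j.choose i) * (1 + (i:ℤ)*x)^n
      = ∑ k ∈ range (n+1), ((-1:ℤ)^i * (j.choose i) * ((n.choose k : ℤ) * ((i:ℤ)*x)^k)) := by
    intro i _
    rw [show (1 + (i:ℤ)*x) = ((i:ℤ)*x + 1) by ring, add_pow, mul_sum]
    exact sum_congr rfl fun k _ => by rw [one_pow]; ring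
  rw [sum_congr rfl h1, Finset.sum_comm]
  refine sum_congr rfl fun k _ => ?_
  rw [mul_sum]
  exact sum_congr rfl fun i _ => by rw [mul_pow]; ring

lemma factorial_dvd_T (n : ℕ) (x : ℤ) (j : ℕ) : (j.factorial : ℤ) ∣ T n x j := by
  rw [T_eq_sum_A]
  exact Finset.dvd_sum fun k _ => Dvd.dvd.mul_left (factorial_dvd_A k j) _

/-- A composite number other than 4 divides `(m-1)!`. -/
lemma composite_dvd_factorial_pred (m : ℕ) (h2 : 2 ≤ m) (hnp : ¬ m.Prime) (h4 : m ≠ 4) :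
    m ∣ (m-1).factorial := by
  obtain ⟨a, ha, ha2, ham⟩ := Nat.exists_dvd_of_not_prime2 h2 hnp
  obtain ⟨c, hc⟩ := ha
  have hc2 : 2 ≤ c := by
    rcases c with _ | _ | c
    · omega
    · omega
    · omega
  have hne4 : a + c ≤ m - 1 := by
    have : a + c + 1 ≤ a * c := by
      rcases Nat.lt_or_ge a 3 with h3 | h3
      · have haa : a = 2 := by omega
        subst haa
        have : c ≠ 2 := by rintro rfl; exact h4 (by omega)
        omega
      · obtain ⟨a', rfl⟩ : ∃ a', a = a' + 3 := ⟨a - 3, by omega⟩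
        obtain ⟨c', rfl⟩ : ∃ c', c = c' + 2 := ⟨c - 2, by omega⟩
        nlinarith [Nat.zero_le (a' * c')]
    omega
  calc m = a * c := hc
    _ ∣ a.factorial * c.factorial :=
        mul_dvd_mul (Nat.dvd_factorial (by omega) le_rfl) (Nat.dvd_factorial (by omega) le_rfl)
    _ ∣ (a + c).factorial := Nat.factorial_mul_factorial_dvd_factorial_add a c
    _ ∣ (m - 1).factorial := Nat.factorial_dvd_factorial hne4


lemma zmod_sum_pow_eq_zero (p : ℕ) [Fact p.Prime] (n : ℕ) (h1 : 1 ≤ n) (h : ¬ (p-1) ∣ n) :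
    ∑ z : ZMod p, z ^ n = 0 := by
  have hp := (Fact.out : p.Prime)
  have hp2 : 2 ≤ p := hp.two_le
  set r := n % (p-1) with hr
  have hppos : 0 < p - 1 := by omega
  have hrlt : r < p - 1 := Nat.mod_lt _ hppos
  have hrpos : r ≠ 0 := fun h0 => h (Nat.dvd_of_mod_eq_zero h0)
  have step : ∀ z : ZMod p, z ^ n = z ^ r := by
    intro z
    by_cases hz : z = 0
    · subst hz
      rw [zero_pow (by omega : n ≠ 0), zero_pow hrpos]
    · have hz1 : z ^ (p-1) = 1 := ZMod.pow_card_sub_one_eq_one hz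
      conv_lhs => rw [show n = (p-1) * (n / (p-1)) + r from (Nat.div_add_mod n (p-1)).symm]
      rw [pow_add, pow_mul, hz1, one_pow, one_mul]
  rw [Finset.sum_congr rfl (fun z _ => step z)]
  exact FiniteField.sum_pow_lt_card_sub_one (K := ZMod p) r (by rw [ZMod.card]; exact hrlt)

lemma choose_pred_cast (p : ℕ) [Fact p.Prime] :
    ∀ i, i ≤ p - 1 → (((p-1).choose i : ℕ) : ZMod p) = (-1)^i := by
  have hp := (Fact.out : p.Prime)
  have hp2 : 2 ≤ p := hp.two_le
  intro i
  induction i with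
  | zero => simp
  | succ i ih =>
    intro hi
    have hip : i + 1 < p := by omega
    have hkey : (p-1).choose i + (p-1).choose (i+1) = p.choose (i+1) := by
      conv_rhs => rw [show p = (p-1)+1 by omega]
      rw [Nat.choose_succ_succ]
    have hdvd : p ∣ p.choose (i+1) := hp.dvd_choose_self (Nat.succ_ne_zero i) hip
    have hzero : ((p.choose (i+1) : ℕ) : ZMod p) = 0 :=
      (ZMod.natCast_eq_zero_iff _ _).mpr hdvd
    have hcast : (((p-1).choose i : ℕ) : ZMod p) + (((p-1).choose (i+1) : ℕ) : ZMod p) = 0 := by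
      rw [← Nat.cast_add, hkey, hzero]
    rw [ih (by omega)] at hcast
    have : (((p-1).choose (i+1) : ℕ) : ZMod p) = -(-1)^i := by linear_combination hcast
    rw [this, pow_succ]
    ring

lemma prime_dvd_T (n : ℕ) (x : ℤ) (p : ℕ) (hp : p.Prime) (hodd : p ≠ 2) (hn : Odd n) :
    (p:ℤ) ∣ T n x (p-1) := by
  haveI : Fact p.Prime := ⟨hp⟩
  have hp2 := hp.two_le
  have h1 : p - 1 + 1 = p := by omega
  have hn1 : 1 ≤ n := by
    rcases hn with ⟨m, hm⟩
    omega
  rw [← ZMod.intCast_zmod_eq_zero_iff_dvd]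
  unfold T
  push_cast
  rw [h1]
  have hterm : ∀ i ∈ range p,
      ((-1:ZMod p))^i * (((p-1).choose i : ℕ) : ZMod p) * ((1:ZMod p) + (i:ZMod p) * (x:ZMod p))^n
        = ((1:ZMod p) + (i:ZMod p)*(x:ZMod p))^n := by
    intro i hi
    rw [choose_pred_cast p i (by have := mem_range.mp hi; omega)]
    have hone : ((-1:ZMod p))^i * (-1)^i = 1 := by
      rw [← pow_add, ← two_mul, pow_mul]
      norm_num
    rw [hone, one_mul]
  rw [sum_congr rfl hterm]
  have hbij : ∑ i ∈ range p, ((1:ZMod p) + (i:ZMod p)*(x:ZMod p))^n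
      = ∑ z : ZMod p, ((1:ZMod p) + z*(x:ZMod p))^n := by
    refine Finset.sum_nbij' (i := fun i => ((i:ℕ) : ZMod p)) (j := fun z => z.val)
      ?_ ?_ ?_ ?_ ?_
    · intro a _
      exact mem_univ _
    · intro z _
      exact mem_range.mpr (ZMod.val_lt z)
    · intro a ha
      exact ZMod.val_cast_of_lt (mem_range.mp ha)
    · intro z _
      exact ZMod.natCast_rightInverse z
    · intro a _
      rfl
  rw [hbij]
  by_cases hx : (x : ZMod p) = 0
  · rw [Finset.sum_congr rfl (fun (z : ZMod p) _ => by rw [hx, mul_zero, add_zero, one_pow])]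
    rw [Finset.sum_const, Finset.card_univ, ZMod.card, nsmul_eq_mul, mul_one, ZMod.natCast_self]
  · have hnd : ¬ (p-1) ∣ n := by
      intro hd
      have hpodd : Odd p := hp.odd_of_ne_two hodd
      obtain ⟨t, ht⟩ := hpodd
      have h2 : 2 ∣ p - 1 := ⟨t, by omega⟩
      obtain ⟨u, hu⟩ := h2.trans hd
      obtain ⟨m, hm⟩ := hn
      omega
    have hcomp : ∑ z : ZMod p, ((1:ZMod p) + z*(x:ZMod p))^n = ∑ w : ZMod p, w^n := by
      rw [← Equiv.sum_comp ((Equiv.mulRight₀ (x : ZMod p) hx).trans (Equiv.addLeft 1)) (fun w => w^n)]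
      rfl
    rw [hcomp]
    exact zmod_sum_pow_eq_zero p n hn1 hnd


lemma zmod4_pow (n : ℕ) (hn : Odd n) (h3 : 3 ≤ n) (y : ZMod 4) : y ^ n = y ^ 3 := by
  obtain ⟨m, hm⟩ := hn
  have hm1 : 1 ≤ m := by omega
  have hne : n = 2*(m-1) + 3 := by omega
  rw [hne, pow_add, pow_mul]
  have hsq : y^2 = 0 ∨ y^2 = 1 := by revert y; decide
  rcases hsq with h | h
  · have hy3 : y^3 = 0 := by
      rw [show (3:ℕ) = 2+1 from rfl, pow_succ, h, zero_mul]
    rw [hy3, mul_zero]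
  · rw [h, one_pow, one_mul]

lemma two_adic (n : ℕ) (hn : Odd n) (h3 : 3 ≤ n) (x : ℤ) :
    (4:ℤ) ∣ 2 * T n x 1 + T n x 3 := by
  have hT1 : T n x 1 = 1 - (1+x)^n := by
    unfold T
    rw [Finset.sum_range_succ, Finset.sum_range_one]
    norm_num
    ring
  have hT3 : T n x 3 = 1 - 3*(1+x)^n + 3*(1+2*x)^n - (1+3*x)^n := by
    unfold T
    rw [Finset.sum_range_succ, Finset.sum_range_succ, Finset.sum_range_succ,
      Finset.sum_range_one]
    norm_num
    ring
  have key : ∀ y : ZMod 4,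
      2*(1 - (1+y)^n) + (1 - 3*(1+y)^n + 3*(1+2*y)^n - (1+3*y)^n) = 0 := by
    intro y
    rw [zmod4_pow n hn h3 (1+y), zmod4_pow n hn h3 (1+2*y), zmod4_pow n hn h3 (1+3*y)]
    revert y
    decide
  rw [hT1, hT3, show (4:ℤ) = ((4:ℕ):ℤ) by norm_num, ← ZMod.intCast_zmod_eq_zero_iff_dvd]
  push_cast
  linear_combination key ((x : ZMod 4))

open Polynomial in
lemma bernoulli_coeff (n i : ℕ) (h : i ≤ n) :
    (Polynomial.bernoulli n).coeff i = _root_.bernoulli (n - i) * (n.choose i) := by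
  rw [Polynomial.bernoulli_def, finset_sum_coeff]
  rw [Finset.sum_eq_single i]
  · rw [coeff_monomial, if_pos rfl]
  · intro b _ hbi
    rw [coeff_monomial, if_neg hbi]
  · intro hi
    exact absurd (mem_range.mpr (by omega)) hi

open Polynomial in
lemma bernoulli_natDegree (n : ℕ) : (Polynomial.bernoulli n).natDegree = n := by
  have hle : (Polynomial.bernoulli n).natDegree ≤ n := by
    refine Polynomial.natDegree_le_iff_coeff_eq_zero.mpr fun m hm => ?_
    rw [Polynomial.bernoulli_def, finset_sum_coeff]
    refine Finset.sum_eq_zero fun b hb => ?_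
    rw [coeff_monomial, if_neg (by have := mem_range.mp hb; omega)]
  have hne : (Polynomial.bernoulli n).coeff n ≠ 0 := by
    rw [bernoulli_coeff n n le_rfl, Nat.sub_self]
    simp
  exact le_antisymm hle (Polynomial.le_natDegree_of_ne_zero hne)

open Polynomial in
lemma eval_reverse_bernoulli (n : ℕ) (x : ℚ) :
    ((Polynomial.bernoulli n).reverse).eval x
      = ∑ i ∈ range (n+1), (n.choose i : ℚ) * _root_.bernoulli i * x^i := by
  have hrev : (Polynomial.bernoulli n).reverse = reflect n (Polynomial.bernoulli n) := by
    rw [Polynomial.reverse, bernoulli_natDegree]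
  have hdeg : (reflect n (Polynomial.bernoulli n)).natDegree < n + 1 := by
    refine Nat.lt_succ_of_le (Polynomial.natDegree_le_iff_coeff_eq_zero.mpr fun m hm => ?_)
    rw [coeff_reflect, Polynomial.revAt_eq_self_of_lt hm]
    exact Polynomial.coeff_eq_zero_of_natDegree_lt (by rw [bernoulli_natDegree]; exact hm)
  rw [hrev, Polynomial.eval_eq_sum_range' hdeg]
  refine sum_congr rfl fun i hi => ?_
  have hin : i ≤ n := by have := mem_range.mp hi; omega
  rw [coeff_reflect, Polynomial.revAt_le hin, bernoulli_coeff n (n-i) (by omega),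
    Nat.sub_sub_self hin, Nat.choose_symm hin]
  ring

lemma main_identity (n : ℕ) (x : ℤ) :
    ∑ i ∈ range (n+1), (n.choose i : ℚ) * _root_.bernoulli i * (x:ℚ)^i
      = ∑ j ∈ range (n+1), (T n x j : ℚ) / ((j:ℚ)+1) := by
  have step1 : ∀ i ∈ range (n+1),
      (n.choose i : ℚ) * _root_.bernoulli i * (x:ℚ)^i
        = ∑ j ∈ range (n+1), (n.choose i : ℚ) * (x:ℚ)^i * ((A j i : ℚ) / ((j:ℚ)+1)) := by
    intro i hi
    have hin : i ≤ n := by have := mem_range.mp hi; omega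
    have hw : _root_.bernoulli i = ∑ j ∈ range (n+1), (A j i : ℚ) / ((j:ℚ)+1) := by
      rw [worpitzky i]
      refine Finset.sum_subset (by intro t ht; exact mem_range.mpr (by have := mem_range.mp ht; omega)) ?_
      intro j _ hj
      have : i < j := by by_contra hc; exact hj (mem_range.mpr (by omega))
      rw [A_eq_zero i j this]
      norm_num
    rw [hw, Finset.mul_sum, Finset.sum_mul]
    exact sum_congr rfl fun j _ => by ring
  rw [sum_congr rfl step1, Finset.sum_comm]
  refine sum_congr rfl fun j _ => ?_
  have hT := congrArg (Int.cast : ℤ → ℚ) (T_eq_sum_A n x j)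
  push_cast at hT
  have hdiv : ∑ i ∈ range (n+1), (n.choose i:ℚ) * (x:ℚ)^i * ((A j i:ℚ) / ((j:ℚ)+1))
      = (∑ i ∈ range (n+1), (n.choose i:ℚ) * (x:ℚ)^i * (A j i:ℚ)) / ((j:ℚ)+1) := by
    rw [Finset.sum_div]
    exact sum_congr rfl fun i _ => by ring
  rw [hdiv, ← hT]

end RevBern

theorem reverse_bernoulliPoly_integer_valued (n : ℕ) (hn : Odd n) (hn3 : 3 ≤ n) (x : ℤ) :
    ∃ m : ℤ, ((Polynomial.bernoulli n).reverse).eval (x : ℚ) = (m : ℚ) := by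
  rw [RevBern.eval_reverse_bernoulli, RevBern.main_identity]
  set s : Finset ℕ := range (n+1) with hs
  have hsub : ({1,3} : Finset ℕ) ⊆ s := by
    intro a ha
    rw [hs]
    simp only [Finset.mem_insert, Finset.mem_singleton] at ha
    rcases ha with rfl | rfl <;> exact mem_range.mpr (by omega)
  set t : Finset ℕ := s \ {1, 3} with ht
  have hsplit : ∑ j ∈ s, (RevBern.T n x j : ℚ) / ((j:ℚ)+1)
      = ∑ j ∈ t, (RevBern.T n x j : ℚ) / ((j:ℚ)+1)
        + ((RevBern.T n x 1 : ℚ)/2 + (RevBern.T n x 3 : ℚ)/4) := by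
    rw [← Finset.sum_sdiff hsub]
    congr 1
    rw [Finset.sum_pair (by norm_num : (1:ℕ) ≠ 3)]
    norm_num
  have hdvd : ∀ j ∈ t, ((j:ℤ)+1) ∣ RevBern.T n x j := by
    intro j hjt
    obtain ⟨hjs, hj13⟩ := Finset.mem_sdiff.mp hjt
    have hj1 : j ≠ 1 := fun h => hj13 (by simp [h])
    have hj3 : j ≠ 3 := fun h => hj13 (by simp [h])
    rcases Nat.eq_zero_or_pos j with rfl | hjpos
    · simpa using one_dvd _
    by_cases hp : (j+1).Prime
    · have hne2 : j + 1 ≠ 2 := by omega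
      have hP := RevBern.prime_dvd_T n x (j+1) hp hne2 hn
      rw [Nat.add_sub_cancel] at hP
      have hc : (((j+1:ℕ)):ℤ) = (j:ℤ)+1 := by push_cast; ring
      rwa [hc] at hP
    · have h4 : j + 1 ≠ 4 := by omega
      have hd := RevBern.composite_dvd_factorial_pred (j+1) (by omega) hp h4
      rw [Nat.add_sub_cancel] at hd
      have hdz : ((j+1:ℕ):ℤ) ∣ (j.factorial : ℤ) := Int.natCast_dvd_natCast.mpr hd
      have hfin := dvd_trans hdz (RevBern.factorial_dvd_T n x j)
      have hc : (((j+1:ℕ)):ℤ) = (j:ℤ)+1 := by push_cast; ring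
      rwa [hc] at hfin
  have htpart : ∀ j ∈ t, (RevBern.T n x j : ℚ)/((j:ℚ)+1)
      = ((RevBern.T n x j / ((j:ℤ)+1) : ℤ) : ℚ) := by
    intro j hjt
    rw [Int.cast_div_charZero (hdvd j hjt)]
    push_cast
    ring
  have h24 := RevBern.two_adic n hn hn3 x
  refine ⟨(∑ j ∈ t, RevBern.T n x j / ((j:ℤ)+1)) + (2 * RevBern.T n x 1 + RevBern.T n x 3)/4, ?_⟩
  rw [hsplit, Finset.sum_congr rfl htpart]
  have hc4 : (((2 * RevBern.T n x 1 + RevBern.T n x 3)/4 : ℤ) : ℚ)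
      = (2*(RevBern.T n x 1:ℚ) + (RevBern.T n x 3:ℚ))/4 := by
    rw [Int.cast_div_charZero h24]
    push_cast
    ring
  push_cast [hc4]
  ring
end

section
/- For every natural number n, the polynomial (n+1)·σ_n*(X) is integer-valued, where σ_n*(X) is the reciprocal polynomial of σ_n(X); equivalently, for every integer x, the value ∑_{k=0}^{n} binom(n+1,k)·B_k·x^k + (n+1)·x is an integer. -/
open Finset Nat

noncomputable def Rz : Subring ℚ := (Int.castRingHom ℚ).range

lemma Rz_intCast (z : ℤ) : (z : ℚ) ∈ Rz := ⟨z, rfl⟩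

lemma Rz_natCast (m : ℕ) : (m : ℚ) ∈ Rz := ⟨m, by simp⟩

lemma Rz_exists {q : ℚ} (h : q ∈ Rz) : ∃ z : ℤ, q = (z : ℚ) := by
  obtain ⟨z, hz⟩ := h
  exact ⟨z, hz.symm⟩

lemma AM_factorial_mul_bernoulli_mem (k : ℕ) :
    ((k + 1)! : ℚ) * bernoulli k ∈ Rz := by
  induction k using Nat.strong_induction_on with
  | _ k ih =>
    have hs := sum_bernoulli (k + 1)
    rw [Finset.sum_range_succ] at hs
    have hch : (((k + 1).choose k : ℕ) : ℚ) = (k : ℚ) + 1 := by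
      rw [Nat.choose_succ_self_right]; push_cast; ring
    have hBk : ((k : ℚ) + 1) * bernoulli k
        = (if k + 1 = 1 then (1 : ℚ) else 0)
          - ∑ j ∈ range k, ((k + 1).choose j : ℚ) * bernoulli j := by
      rw [← hs, hch]; ring
    have hfs : ((k + 1)! : ℚ) * bernoulli k
        = (k ! : ℚ) * (((k : ℚ) + 1) * bernoulli k) := by
      rw [Nat.factorial_succ]; push_cast; ring
    rw [hfs, hBk, mul_sub, Finset.mul_sum]
    refine Subring.sub_mem _ ?_ (Subring.sum_mem _ ?_)
    · split
      · simpa using Rz_natCast (k !)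
      · simpa using Subring.zero_mem Rz
    · intro j hj
      have hj' : j < k := Finset.mem_range.mp hj
      obtain ⟨e, he⟩ : (j + 1)! ∣ k ! := Nat.factorial_dvd_factorial (by omega)
      have hsh : (k ! : ℚ) * (((k + 1).choose j : ℚ) * bernoulli j)
          = ((k + 1).choose j : ℚ) * (e : ℚ) * (((j + 1)! : ℚ) * bernoulli j) := by
        rw [he]; push_cast; ring
      rw [hsh]
      exact Subring.mul_mem _ (Subring.mul_mem _ (Rz_natCast _) (Rz_natCast _)) (ih j hj')



lemma AM_aux_sum_div (p : ℕ) (hp : 2 ≤ p) : ∀ (b n : ℕ), ∑ i ∈ range b, n / p ^ (i + 1) ≤ n - 1 := by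
  intro b
  induction b with
  | zero => intro n; simp
  | succ b ih =>
    intro n
    rw [Finset.sum_range_succ']
    have h1 : ∀ i, n / p ^ (i + 1 + 1) = (n / p) / p ^ (i + 1) := by
      intro i
      rw [Nat.div_div_eq_div_mul, ← pow_succ']
    simp only [h1, zero_add, pow_one]
    have h2 := ih (n / p)
    have h4 : p * (n / p) ≤ n := by
      calc p * (n / p) = n / p * p := by ring
      _ ≤ n := Nat.div_mul_le_self n p
    have h5 : 2 * (n / p) ≤ p * (n / p) := Nat.mul_le_mul_right _ hp
    omega

lemma AM_not_pow_dvd_factorial {p : ℕ} (hp : p.Prime) (k : ℕ) :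
    ¬ p ^ (k + 1) ∣ (k + 1)! := by
  intro h
  rw [Nat.Prime.pow_dvd_factorial_iff hp (Nat.lt_succ_self _)] at h
  rw [Finset.sum_Ico_eq_sum_range] at h
  have heq : ∀ i, (k+1) / p ^ (1 + i) = (k+1) / p ^ (i+1) := fun i => by
    rw [Nat.add_comm 1 i]
  simp only [Nat.succ_eq_add_one, heq] at h
  have := AM_aux_sum_div p hp.two_le (Nat.log p (k + 1) + 1 - 1) (k + 1)
  omega



lemma AM_coprime (k a : ℕ) (ha : 0 < a) :
    Nat.Coprime ((k + 1)! / Nat.gcd ((k + 1)!) (a ^ k)) a := by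
  set d := (k + 1)! with hd
  set g := Nat.gcd d (a ^ k) with hg
  have hdpos : 0 < d := Nat.factorial_pos _
  have hgd : g ∣ d := Nat.gcd_dvd_left _ _
  have hga : g ∣ a ^ k := Nat.gcd_dvd_right _ _
  have hgpos : 0 < g := Nat.gcd_pos_of_pos_left _ hdpos
  by_contra hcop
  obtain ⟨p, hp, hpdvd⟩ := Nat.exists_prime_and_dvd hcop
  have hpc : p ∣ d / g := hpdvd.trans (Nat.gcd_dvd_left _ _)
  have hpa : p ∣ a := hpdvd.trans (Nat.gcd_dvd_right _ _)
  -- p * g ∣ d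
  obtain ⟨t, ht⟩ := hpc
  have hpgd : p * g ∣ d := by
    refine ⟨t, ?_⟩
    rw [← Nat.div_mul_cancel hgd, ht]
    ring
  set v := g.factorization p with hv
  have hpvg : p ^ v ∣ g := Nat.ordProj_dvd g p
  have hv1d : p ^ (v + 1) ∣ d := by
    calc p ^ (v + 1) = p * p ^ v := by ring
    _ ∣ p * g := mul_dvd_mul_left p hpvg
    _ ∣ d := hpgd
  have hvk : v + 1 ≤ k := by
    by_contra hc
    push_neg at hc
    exact AM_not_pow_dvd_factorial hp k ((pow_dvd_pow p (by omega)).trans hv1d)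
  -- p * g ∣ a ^ k
  have hane : a ^ k ≠ 0 := pow_ne_zero _ ha.ne'
  have hpga : p * g ∣ a ^ k := by
    rw [← Nat.factorization_le_iff_dvd (Nat.mul_ne_zero hp.ne_zero hgpos.ne') hane]
    rw [Nat.factorization_mul hp.ne_zero hgpos.ne']
    have hfg : g.factorization ≤ (a ^ k).factorization :=
      (Nat.factorization_le_iff_dvd hgpos.ne' hane).mpr hga
    intro q
    by_cases hq : q = p
    · have h1 : a.factorization p ≥ 1 := by
        have := (Nat.Prime.dvd_iff_one_le_factorization hp ha.ne').mp hpa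
        omega
      have h2 : (a ^ k).factorization q = k * a.factorization q := by
        rw [Nat.factorization_pow]; rfl
      rw [hq] at h2 ⊢
      have h3 : (Nat.factorization p) p = 1 := by
        rw [hp.factorization]; simp
      simp only [Finsupp.coe_add, Pi.add_apply, h3, h2]
      have : k ≤ k * a.factorization p := Nat.le_mul_of_pos_right k (by omega)
      omega
    · have h3 : (Nat.factorization p) q = 0 := by
        rw [hp.factorization]
        simp [Ne.symm hq]
      simp only [Finsupp.coe_add, Pi.add_apply, h3, zero_add]
      exact hfg q
  have : p * g ∣ g := Nat.dvd_gcd hpgd hpga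
  have hle : p * g ≤ g := Nat.le_of_dvd hgpos this
  have : 2 * g ≤ p * g := Nat.mul_le_mul_right _ hp.two_le
  omega



lemma AM_pos (n : ℕ) (a : ℕ) (ha : 0 < a) :
    ∑ k ∈ range (n + 1), ((n + 1).choose k : ℚ) * bernoulli k * (a : ℚ) ^ k ∈ Rz := by
  set c : ℕ → ℕ := fun k => (k + 1)! / Nat.gcd ((k + 1)!) (a ^ k) with hc
  set C := ∏ k ∈ range (n + 1), c k with hC
  have hcpos : ∀ k, 0 < c k := by
    intro k
    apply Nat.div_pos (Nat.le_of_dvd (Nat.factorial_pos _) (Nat.gcd_dvd_left _ _))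
    exact Nat.gcd_pos_of_pos_left _ (Nat.factorial_pos _)
  have hCpos : 0 < C := Finset.prod_pos fun k _ => hcpos k
  have hacop : Nat.Coprime a C :=
    Nat.Coprime.prod_right fun k _ => (AM_coprime k a ha).symm
  set N := a ^ (C.totient - 1) with hNdef
  have hNpos : 0 < N := pow_pos ha _
  have haN : a * N ≡ 1 [MOD C] := by
    have ht : 0 < C.totient := Nat.totient_pos.mpr hCpos
    have : a * N = a ^ C.totient := by
      rw [hNdef, ← _root_.pow_succ']
      congr 1
      omega
    rw [this]
    exact Nat.ModEq.pow_totient hacop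
  -- Faulhaber
  set z0 : ℕ := ∑ k ∈ range N, k ^ n with hz0
  set T : ℚ := ∑ i ∈ range (n + 1),
      bernoulli i * ((n + 1).choose i : ℚ) * (N : ℚ) ^ (n + 1 - i) with hTdef
  have hfaul := sum_range_pow N n
  rw [← Finset.sum_div] at hfaul
  have hne : ((n : ℚ) + 1) ≠ 0 := by positivity
  have hT : T = ((n : ℚ) + 1) * ((z0 : ℕ) : ℚ) := by
    have h1 : ((z0 : ℕ) : ℚ) = ∑ k ∈ range N, (k : ℚ) ^ n := by
      rw [hz0]; push_cast; rfl
    rw [← h1] at hfaul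
    rw [hTdef]
    field_simp at hfaul
    linarith [hfaul]
  -- main identity
  have hiden : ∑ k ∈ range (n + 1), ((n + 1).choose k : ℚ) * bernoulli k * (a : ℚ) ^ k
      = (a : ℚ) ^ (n + 1) * T
        + ∑ k ∈ range (n + 1), ((n + 1).choose k : ℚ) * bernoulli k *
            ((a : ℚ) ^ k - (a : ℚ) ^ (n + 1) * (N : ℚ) ^ (n + 1 - k)) := by
    rw [hTdef, Finset.mul_sum, ← Finset.sum_add_distrib]
    refine Finset.sum_congr rfl fun k _ => by ring
  rw [hiden]
  refine Subring.add_mem _ ?_ (Subring.sum_mem _ ?_)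
  · rw [hT]
    refine ⟨(a : ℤ) ^ (n + 1) * ((n : ℤ) + 1) * (z0 : ℤ), ?_⟩
    simp only [Int.coe_castRingHom]
    push_cast
    ring
  · intro k hk
    have hkn : k ≤ n := by
      have := Finset.mem_range.mp hk; omega
    set e := n + 1 - k with he
    have hepos : 0 < e := by omega
    -- divisibility
    set g := Nat.gcd ((k + 1)!) (a ^ k) with hg
    have hsplit : g * c k = (k + 1)! := Nat.mul_div_cancel' (Nat.gcd_dvd_left _ _)
    have hckC : c k ∣ C := Finset.dvd_prod_of_mem _ hk
    have h1le : 1 ≤ (a * N) ^ e := Nat.one_le_pow _ _ (by positivity)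
    have haN1 : (a * N) ^ e ≡ 1 [MOD c k] := by
      have := (Nat.ModEq.of_dvd hckC haN).pow e
      simpa using this
    have hdvd1 : c k ∣ (a * N) ^ e - 1 := (Nat.modEq_iff_dvd' h1le).mp haN1.symm
    have hu : g ∣ a ^ k := Nat.gcd_dvd_right _ _
    have hcopk : (c k).Coprime a := AM_coprime k a ha
    have hcu : (c k).Coprime g := (hcopk.pow_right k).coprime_dvd_right hu
    have htotal : (k + 1)! ∣ a ^ k * ((a * N) ^ e - 1) := by
      rw [← hsplit]
      exact hcu.symm.mul_dvd_of_dvd_of_dvd (hu.mul_right _) (hdvd1.mul_left _)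
    obtain ⟨w, hw⟩ := htotal
    have key : (a : ℚ) ^ k * (((a * N : ℕ) : ℚ) ^ e - 1) = ((k + 1)! : ℚ) * (w : ℤ) := by
      have h2 : (((a * N) ^ e - 1 : ℕ) : ℚ) = ((a * N : ℕ) : ℚ) ^ e - 1 := by
        rw [Nat.cast_sub h1le]; push_cast; ring
      have h3 := congrArg (fun t : ℕ => (t : ℚ)) hw
      simp only [Nat.cast_mul, h2] at h3
      push_cast at h3 ⊢
      linear_combination h3
    have hexp : (a : ℚ) ^ (n + 1) = (a : ℚ) ^ k * (a : ℚ) ^ e := by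
      rw [← pow_add]; congr 1; omega
    have hmul : ((a * N : ℕ) : ℚ) = (a : ℚ) * (N : ℚ) := by push_cast; ring
    rw [hmul] at key
    have hterm : ((n + 1).choose k : ℚ) * bernoulli k *
          ((a : ℚ) ^ k - (a : ℚ) ^ (n + 1) * (N : ℚ) ^ e)
        = -(((n + 1).choose k : ℚ) * ((w : ℤ) : ℚ) * (((k + 1)! : ℚ) * bernoulli k)) := by
      rw [hexp]
      linear_combination (-(((n + 1).choose k : ℚ)) * bernoulli k) * key
    rw [hterm]
    exact Subring.neg_mem _ (Subring.mul_mem _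
      (Subring.mul_mem _ (Rz_natCast _) (Rz_intCast _)) (AM_factorial_mul_bernoulli_mem k))



lemma AM_shift (n : ℕ) (x y : ℤ) (hdvd : (((n + 1)! : ℕ) : ℤ) ∣ (x - y)) :
    (∑ k ∈ range (n + 1), ((n + 1).choose k : ℚ) * bernoulli k * (x : ℚ) ^ k)
      - ∑ k ∈ range (n + 1), ((n + 1).choose k : ℚ) * bernoulli k * (y : ℚ) ^ k ∈ Rz := by
  rw [← Finset.sum_sub_distrib]
  refine Subring.sum_mem _ fun k hk => ?_
  have hkn : k ≤ n := by have := Finset.mem_range.mp hk; omega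
  have hxy : y ≡ x [ZMOD (((n + 1)! : ℕ) : ℤ)] := Int.modEq_iff_dvd.mpr hdvd
  have hdk : (((n + 1)! : ℕ) : ℤ) ∣ x ^ k - y ^ k := Int.ModEq.dvd (hxy.pow k)
  obtain ⟨w, hw⟩ := hdk
  obtain ⟨e, he⟩ : (k + 1)! ∣ (n + 1)! := Nat.factorial_dvd_factorial (by omega)
  have hQ : (x : ℚ) ^ k - (y : ℚ) ^ k = (((n + 1)! : ℕ) : ℚ) * ((w : ℤ) : ℚ) := by
    exact_mod_cast congrArg (fun t : ℤ => (t : ℚ)) hw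
  have hQ2 : (((n + 1)! : ℕ) : ℚ) = (((k + 1)! : ℕ) : ℚ) * ((e : ℕ) : ℚ) := by
    exact_mod_cast he
  have hterm : ((n + 1).choose k : ℚ) * bernoulli k * (x : ℚ) ^ k
        - ((n + 1).choose k : ℚ) * bernoulli k * (y : ℚ) ^ k
      = ((n + 1).choose k : ℚ) * ((e : ℕ) : ℚ) * ((w : ℤ) : ℚ)
          * (((k + 1)! : ℕ) : ℚ) * bernoulli k := by
    linear_combination (((n + 1).choose k : ℚ) * bernoulli k) * hQ
      + (((n + 1).choose k : ℚ) * bernoulli k * ((w : ℤ) : ℚ)) * hQ2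
  rw [hterm, mul_assoc _ (((k + 1)! : ℕ) : ℚ) (bernoulli k)]
  exact Subring.mul_mem _ (Subring.mul_mem _ (Subring.mul_mem _ (Rz_natCast _) (Rz_natCast _))
    (Rz_intCast _)) (AM_factorial_mul_bernoulli_mem k)

theorem sigma_reverse_integer_valued (n : ℕ) (x : ℤ) :
    ∃ m : ℤ, ∑ k ∈ Finset.range (n + 1), ((n + 1).choose k : ℚ) * bernoulli k * (x : ℚ) ^ k
      + (n + 1 : ℚ) * (x : ℚ) = (m : ℚ) := by
  set D : ℤ := (((n + 1)! : ℕ) : ℤ) with hD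
  have hDpos : 0 < D := by positivity
  set y : ℤ := x % D + D with hy
  have hy1 : 0 < y := by
    have h1 := Int.emod_nonneg x hDpos.ne'
    omega
  have hdvd : D ∣ x - y := by
    have h2 : x % D = x - D * (x / D) := Int.emod_def x D
    have : x - y = D * (x / D) - D := by omega
    rw [this]
    exact dvd_sub (Dvd.intro _ rfl) (dvd_refl D)
  set a : ℕ := y.toNat with ha
  have hapos : 0 < a := by omega
  have hya : ((a : ℕ) : ℤ) = y := Int.toNat_of_nonneg hy1.le
  have hyaQ : ((a : ℕ) : ℚ) = ((y : ℤ) : ℚ) := by exact_mod_cast congrArg (fun t : ℤ => (t : ℚ)) hya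
  have hposmem := AM_pos n a hapos
  rw [hyaQ] at hposmem
  have hshift := AM_shift n x y hdvd
  have htot : ∑ k ∈ range (n + 1), ((n + 1).choose k : ℚ) * bernoulli k * (x : ℚ) ^ k ∈ Rz := by
    have := Subring.add_mem _ hshift hposmem
    simpa using this
  obtain ⟨z, hz⟩ := htot
  refine ⟨z + (n + 1) * x, ?_⟩
  have hz' : (z : ℚ) = ∑ k ∈ range (n + 1), ((n + 1).choose k : ℚ) * bernoulli k * (x : ℚ) ^ k := hz
  rw [← hz']
  push_cast
  ring
end

section
/- Let a ≥ 2 be an integer and n a natural number. Then the generalized Genocchi number G_{n,a} equals the value at a of the polynomial 𝒢_n(X): that is, n!·(coeff n of the formal power series (a : ℚ) • X · (∑_{j=0}^{a-1} rescale j (exp ℚ))⁻¹ in ℚ[[X]]) = ∑_{k=0}^{n−1} binom(n,k)·B_k·a^k. -/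
open PowerSeries Finset

theorem genGenocchi_eq_poly_eval (a : ℕ) (ha : 2 ≤ a) (n : ℕ) :
    genGenocchi n a = ∑ k ∈ Finset.range n, (n.choose k : ℚ) * bernoulli k * (a : ℚ) ^ k := by
  have ha0 : (a : ℚ) ≠ 0 := by
    have : 0 < a := by omega
    exact_mod_cast this.ne'
  set S := ∑ j ∈ Finset.range a, PowerSeries.rescale (j : ℚ) (PowerSeries.exp ℚ) with hSdef
  have hS : PowerSeries.constantCoeff S = (a : ℚ) := by
    rw [hSdef, map_sum]
    rw [show ((a : ℚ)) = ∑ _j ∈ Finset.range a, (1 : ℚ) by simp]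
    refine Finset.sum_congr rfl fun j _ => ?_
    rw [← PowerSeries.coeff_zero_eq_constantCoeff_apply, PowerSeries.coeff_rescale]
    simp [PowerSeries.coeff_exp]
  have hgeo : S * (PowerSeries.exp ℚ - 1) = PowerSeries.rescale (a : ℚ) (PowerSeries.exp ℚ) - 1 := by
    calc S * (PowerSeries.exp ℚ - 1)
        = (∑ j ∈ Finset.range a, PowerSeries.exp ℚ ^ j) * (PowerSeries.exp ℚ - 1) := by
          rw [hSdef]; simp [PowerSeries.exp_pow_eq_rescale_exp]
      _ = PowerSeries.exp ℚ ^ a - 1 := geom_sum_mul _ _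
      _ = _ := by rw [PowerSeries.exp_pow_eq_rescale_exp]
  have key : (a : ℚ) • (PowerSeries.X * S⁻¹) =
      PowerSeries.rescale (a : ℚ) (bernoulliPowerSeries ℚ) * (PowerSeries.exp ℚ - 1) := by
    rw [PowerSeries.smul_eq_C_mul, ← mul_assoc, eq_comm,
      PowerSeries.eq_mul_inv_iff_mul_eq (by rw [hS]; exact ha0)]
    calc PowerSeries.rescale (a : ℚ) (bernoulliPowerSeries ℚ) * (PowerSeries.exp ℚ - 1) * S
        = PowerSeries.rescale (a : ℚ) (bernoulliPowerSeries ℚ) * (S * (PowerSeries.exp ℚ - 1)) := by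
          ring
      _ = PowerSeries.rescale (a : ℚ) (bernoulliPowerSeries ℚ) *
            (PowerSeries.rescale (a : ℚ) (PowerSeries.exp ℚ) - 1) := by rw [hgeo]
      _ = PowerSeries.rescale (a : ℚ) (bernoulliPowerSeries ℚ * (PowerSeries.exp ℚ - 1)) := by
          rw [map_mul, map_sub, map_one]
      _ = PowerSeries.rescale (a : ℚ) PowerSeries.X := by
          rw [bernoulliPowerSeries_mul_exp_sub_one]
      _ = PowerSeries.C (a : ℚ) * PowerSeries.X := PowerSeries.rescale_X _
  rw [genGenocchi, key]
  rw [PowerSeries.coeff_mul, Finset.Nat.sum_antidiagonal_eq_sum_range_succ_mk,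
    Finset.sum_range_succ]
  have hlast : (PowerSeries.coeff n) (PowerSeries.rescale (a : ℚ) (bernoulliPowerSeries ℚ)) *
      (PowerSeries.coeff (n - n)) (PowerSeries.exp ℚ - 1) = 0 := by
    simp [PowerSeries.coeff_exp]
  rw [hlast, add_zero, Finset.mul_sum]
  refine Finset.sum_congr rfl fun k hk => ?_
  rw [Finset.mem_range] at hk
  rw [PowerSeries.coeff_rescale, bernoulliPowerSeries, PowerSeries.coeff_mk, map_sub,
    PowerSeries.coeff_exp]
  have hne : n - k ≠ 0 := by omega
  rw [PowerSeries.coeff_one, if_neg hne]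
  have hfk : (k.factorial : ℚ) ≠ 0 := by exact_mod_cast k.factorial_ne_zero
  have hfnk : ((n - k).factorial : ℚ) ≠ 0 := by exact_mod_cast (n - k).factorial_ne_zero
  have hcf : (n.choose k : ℚ) * (k.factorial : ℚ) * ((n - k).factorial : ℚ) = (n.factorial : ℚ) := by
    exact_mod_cast Nat.choose_mul_factorial_mul_factorial hk.le
  have : algebraMap ℚ ℚ (bernoulli k / k.factorial) = bernoulli k / k.factorial := by simp
  rw [this]
  simp only [Algebra.algebraMap_self, RingHom.id_apply]
  field_simp
  linear_combination (-(bernoulli k)) * hcf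
end
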